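/- arXiv:2008.00374 — 10 statements merged into one kernel-verified Lean document; each statement's English description precedes it below -/
import Mathlib

section
/- Let μ be a matching that complies with eligibility requirements, is non-wasteful, and respects priorities. Define f̄^μ_c = min_{π_c} μ⁻¹(c) if |μ⁻¹(c)| = r_c and f̄^μ_c = ∅ otherwise, and define f̲^μ_c = min_{π_c} { i ∈ μ(I) : i π_c max_{π_c}((I ∖ μ(I)) ∪ {∅}) } if max_{π_c}((I ∖ μ(I)) ∪ {∅}) ≠ ∅ and f̲^μ_c = ∅ otherwise. Then a pair (g, μ) is a cutoff equilibrium if and only if f̄^μ_c weakly-π_c g_c weakly-π_c f̲^μ_c for every category c. -/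
/-!
Every condition of a cutoff equilibrium concerns one category `c` at a time. The conditions
"every patient matched to `c` clears `g c`" and "`g c = ∅` if `c` has free capacity" together
say that `g c` is weakly below `f̄^μ_c`, the lowest patient of a full category. The conditions
"`g c` is a cutoff" and "no unmatched patient clears `g c`" together say that `g c` is weakly
above `f̲^μ_c`, the lowest matched patient above the best eligible unmatched one.
-/

open Finset

section ReserveSystem

variable {I C : Type*} [Fintype I] [DecidableEq I] [Fintype C] [DecidableEq C]

/-- Patient `i` is eligible for category `c` (i.e. `i π_c ∅`). Priorities are encoded by
injective score functions `pr c : Option I → ℕ`, where `none` stands for `∅` and a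
higher score means a higher priority. -/
def Elig (pr : C → Option I → ℕ) (c : C) (i : I) : Prop :=
  pr c none < pr c (some i)

instance (pr : C → Option I → ℕ) (c : C) (i : I) : Decidable (Elig pr c i) := by
  unfold Elig; infer_instance

/-- A matching assigns each patient a category or `none`, respecting capacities `r`. -/
def IsMatching (r : C → ℕ) (μ : I → Option C) : Prop :=
  ∀ c : C, (univ.filter (fun i => μ i = some c)).card ≤ r c

/-- `μ` complies with eligibility requirements. -/
def CompliesEligibility (pr : C → Option I → ℕ) (μ : I → Option C) : Prop :=
  ∀ i c, μ i = some c → Elig pr c i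

/-- `μ` is non-wasteful. -/
def NonWasteful (pr : C → Option I → ℕ) (r : C → ℕ) (μ : I → Option C) : Prop :=
  ∀ i c, Elig pr c i → μ i = none →
    (univ.filter (fun j => μ j = some c)).card = r c

/-- `μ` respects priorities. -/
def RespectsPriorities (pr : C → Option I → ℕ) (μ : I → Option C) : Prop :=
  ∀ i i' c, μ i = some c → μ i' = none → pr c (some i') < pr c (some i)

/-- A cutoff vector: `f c ∈ I ∪ {∅}` with `f c` weakly `π_c`-above `∅`. -/
def IsCutoffVector (pr : C → Option I → ℕ) (f : C → Option I) : Prop :=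
  ∀ c, pr c none ≤ pr c (f c)

/-- `c` belongs to the budget set `B_i(f)`. -/
def InBudget (pr : C → Option I → ℕ) (f : C → Option I) (i : I) (c : C) : Prop :=
  pr c (f c) ≤ pr c (some i)

/-- `(f, μ)` is a cutoff equilibrium: `f` is a cutoff vector, every matched patient is
matched to a category in her budget set, every patient with a nonempty budget set is
matched to a category in her budget set, and every category with unfilled capacity has
cutoff `∅`. -/
def CutoffEquilibrium (pr : C → Option I → ℕ) (r : C → ℕ) (f : C → Option I)
    (μ : I → Option C) : Prop :=
  IsCutoffVector pr f ∧
  (∀ i c, μ i = some c → InBudget pr f i c) ∧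
  (∀ i, (∃ c, InBudget pr f i c) → ∃ c, μ i = some c ∧ InBudget pr f i c) ∧
  (∀ c, (univ.filter (fun i => μ i = some c)).card < r c → f c = none)

/-- `f` is the maximum cutoff vector `f̄^μ` of matching `μ`:
`f̄^μ_c = min_{π_c} μ⁻¹(c)` when category `c` is full, and `∅` otherwise. -/
def IsMaxCutoff (pr : C → Option I → ℕ) (r : C → ℕ) (μ : I → Option C)
    (f : C → Option I) : Prop :=
  ∀ c, ((univ.filter (fun i => μ i = some c)).card = r c ∧
          ∃ m, f c = some m ∧ μ m = some c ∧
            ∀ j, μ j = some c → pr c (some m) ≤ pr c (some j))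
    ∨ ((univ.filter (fun i => μ i = some c)).card ≠ r c ∧ f c = none)

/-- `f` is the minimum cutoff vector `f̲^μ` of matching `μ`:
if `x_c := max_{π_c}((I ∖ μ(I)) ∪ {∅})` is a patient, then
`f̲^μ_c = min_{π_c} { i ∈ μ(I) : i π_c x_c }`, and `f̲^μ_c = ∅` otherwise. -/
def IsMinCutoff (pr : C → Option I → ℕ) (μ : I → Option C) (f : C → Option I) : Prop :=
  ∀ c, ((∃ x, μ x = none ∧ pr c none < pr c (some x) ∧
          (∀ y, μ y = none → pr c (some y) ≤ pr c (some x)) ∧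
          ∃ m, f c = some m ∧ μ m ≠ none ∧ pr c (some x) < pr c (some m) ∧
            ∀ j, μ j ≠ none → pr c (some x) < pr c (some j) →
              pr c (some m) ≤ pr c (some j))
    ∨ ((∀ x, μ x = none → pr c (some x) < pr c none) ∧ f c = none))

section

variable {pr : C → Option I → ℕ} {r : C → ℕ} {μ : I → Option C}

omit [DecidableEq I] [Fintype C] in
theorem cutoffEquilibrium_iff {g : C → Option I} :
    CutoffEquilibrium pr r g μ ↔
      ∀ c, ((∀ i, μ i = some c → pr c (g c) ≤ pr c (some i)) ∧
          ((univ.filter (fun i => μ i = some c)).card < r c → g c = none)) ∧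
        (pr c none ≤ pr c (g c) ∧ ∀ i, μ i = none → pr c (some i) < pr c (g c)) := by
  constructor
  · rintro ⟨hcutoff, hmatched, hbudget, hfree⟩ c
    refine ⟨⟨fun i => hmatched i c, hfree c⟩, hcutoff c, fun i hi => lt_of_not_ge fun hin => ?_⟩
    obtain ⟨c', hc', -⟩ := hbudget i ⟨c, hin⟩
    simp [hi] at hc'
  · intro h
    refine ⟨fun c => (h c).2.1, fun i c => (h c).1.1 i, ?_, fun c => (h c).1.2⟩
    rintro i ⟨c, hin⟩
    cases hi : μ i with
    | none => exact absurd hin (not_le_of_gt ((h c).2.2 i hi))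
    | some c' => exact ⟨c', rfl, (h c').1.1 i hi⟩

omit [DecidableEq I] [Fintype C] in
theorem IsMaxCutoff.le_apply_iff {fbar : C → Option I} (hfbar : IsMaxCutoff pr r μ fbar)
    (hμ : IsMatching r μ) (helig : CompliesEligibility pr μ) {c : C}
    (hpr : Function.Injective (pr c)) {o : Option I} (ho : pr c none ≤ pr c o) :
    pr c o ≤ pr c (fbar c) ↔
      (∀ i, μ i = some c → pr c o ≤ pr c (some i)) ∧
        ((univ.filter (fun i => μ i = some c)).card < r c → o = none) := by
  rcases hfbar c with ⟨hfull, m, hm, hmc, hmin⟩ | ⟨hfull, hnone⟩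
  · rw [hm]
    exact ⟨fun hle => ⟨fun i hi => hle.trans (hmin i hi), by omega⟩,
      fun h => h.1 m hmc⟩
  · rw [hnone]
    constructor
    · intro hle
      obtain rfl : o = none := hpr (le_antisymm hle ho)
      exact ⟨fun i hi => (helig i c hi).le, fun _ => rfl⟩
    · intro h
      rw [h.2 (lt_of_le_of_ne (hμ c) hfull)]

omit [Fintype I] [DecidableEq I] [Fintype C] [DecidableEq C] in
theorem IsMinCutoff.apply_le_iff {fmin : C → Option I} (hfmin : IsMinCutoff pr μ fmin)
    (c : C) (o : Option I) :
    pr c (fmin c) ≤ pr c o ↔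
      pr c none ≤ pr c o ∧ ∀ i, μ i = none → pr c (some i) < pr c o := by
  rcases hfmin c with ⟨x, hx, hxelig, hxmax, m, hm, -, hxm, hmmin⟩ | ⟨hinelig, hnone⟩
  · rw [hm]
    constructor
    · intro hle
      exact ⟨(hxelig.trans (hxm.trans_le hle)).le,
        fun i hi => (hxmax i hi).trans_lt (hxm.trans_le hle)⟩
    · rintro ⟨-, habove⟩
      have hxo := habove x hx
      cases o with
      | none => exact absurd hxelig (not_lt_of_gt hxo)
      | some k => exact hmmin k (fun hk => (habove k hk).false) hxo
  · rw [hnone]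
    exact ⟨fun hle => ⟨hle, fun i hi => (hinelig i hi).trans_le hle⟩, And.left⟩

end

theorem cutoff_equilibrium_interval_general
    (pr : C → Option I → ℕ) (hpr : ∀ c, Function.Injective (pr c))
    (r : C → ℕ) (μ : I → Option C) (hμ : IsMatching r μ)
    (h1 : CompliesEligibility pr μ)
    (fbar : C → Option I) (hfbar : IsMaxCutoff pr r μ fbar)
    (fmin : C → Option I) (hfmin : IsMinCutoff pr μ fmin)
    (g : C → Option I) :
    CutoffEquilibrium pr r g μ ↔
      ∀ c, pr c (g c) ≤ pr c (fbar c) ∧ pr c (fmin c) ≤ pr c (g c) := by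
  rw [cutoffEquilibrium_iff]
  refine forall_congr' fun c => ?_
  rw [hfmin.apply_le_iff]
  exact and_congr_left fun hlow => (hfbar.le_apply_iff hμ h1 (hpr c) hlow.1).symm

/-- Lemma 1: `(g, μ)` is a cutoff equilibrium iff `f̄^μ_c ⪰_{π_c} g_c ⪰_{π_c} f̲^μ_c`
for every category `c`. -/
theorem cutoff_equilibrium_interval
    (pr : C → Option I → ℕ) (hpr : ∀ c, Function.Injective (pr c))
    (r : C → ℕ) (μ : I → Option C) (hμ : IsMatching r μ)
    (h1 : CompliesEligibility pr μ) (h2 : NonWasteful pr r μ)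
    (h3 : RespectsPriorities pr μ)
    (fbar : C → Option I) (hfbar : IsMaxCutoff pr r μ fbar)
    (fmin : C → Option I) (hfmin : IsMinCutoff pr μ fmin)
    (g : C → Option I) :
    CutoffEquilibrium pr r g μ ↔
      ∀ c, pr c (g c) ≤ pr c (fbar c) ∧ pr c (fmin c) ≤ pr c (g c) :=
  cutoff_equilibrium_interval_general pr hpr r μ hμ h1 fbar hfbar fmin hfmin g

end ReserveSystem
end

section
/- If μ is a matching that complies with eligibility requirements, is non-wasteful, and respects priorities, then the vector f̄^μ (with f̄^μ_c = min_{π_c} μ⁻¹(c) if |μ⁻¹(c)| = r_c and ∅ otherwise) is the maximum equilibrium cutoff vector supporting μ: (f̄^μ, μ) is a cutoff equilibrium, and for every cutoff equilibrium (f, μ) and every category c, f̄^μ_c weakly-π_c f_c. -/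
open Finset

section ReserveSystem

variable {I C : Type*} [Fintype I] [DecidableEq I] [Fintype C] [DecidableEq C]

/-- `f̄^μ` is the maximum equilibrium cutoff vector supporting `μ`. -/
theorem max_cutoff_is_maximum_equilibrium
    (pr : C → Option I → ℕ) (hpr : ∀ c, Function.Injective (pr c))
    (r : C → ℕ) (μ : I → Option C) (hμ : IsMatching r μ)
    (h1 : CompliesEligibility pr μ) (h2 : NonWasteful pr r μ)
    (h3 : RespectsPriorities pr μ)
    (fbar : C → Option I) (hfbar : IsMaxCutoff pr r μ fbar) :
    CutoffEquilibrium pr r fbar μ ∧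
      ∀ f : C → Option I, CutoffEquilibrium pr r f μ →
        ∀ c, pr c (f c) ≤ pr c (fbar c) := by
  have hbudget : ∀ i c, μ i = some c → InBudget pr fbar i c := by
    intro i c hic
    rcases hfbar c with ⟨_, m, hm, hmc, hmin⟩ | ⟨_, hnone⟩
    · unfold InBudget; rw [hm]; exact hmin i hic
    · unfold InBudget; rw [hnone]; exact le_of_lt (h1 i c hic)
  refine ⟨⟨?_, hbudget, ?_, ?_⟩, ?_⟩
  · -- IsCutoffVector
    intro c
    rcases hfbar c with ⟨_, m, hm, hmc, _⟩ | ⟨_, hnone⟩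
    · rw [hm]; exact le_of_lt (h1 m c hmc)
    · rw [hnone]
  · -- nonempty budget implies matched
    intro i ⟨c, hic⟩
    cases hμi : μ i with
    | some c' => exact ⟨c', rfl, hbudget i c' hμi⟩
    | none =>
      exfalso
      rcases hfbar c with ⟨_, m, hm, hmc, _⟩ | ⟨hcard, hnone⟩
      · unfold InBudget at hic; rw [hm] at hic
        exact absurd hic (not_le.mpr (h3 m i c hmc hμi))
      · unfold InBudget at hic; rw [hnone] at hic
        have helig : Elig pr c i := by
          rcases lt_or_eq_of_le hic with h | h
          · exact h
          · exact absurd (hpr c h) (by simp)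
        exact hcard (h2 i c helig hμi)
  · -- unfilled capacity
    intro c hlt
    rcases hfbar c with ⟨hcard, _⟩ | ⟨_, hnone⟩
    · omega
    · exact hnone
  · -- maximality
    intro f hf c
    rcases hfbar c with ⟨_, m, hm, hmc, _⟩ | ⟨hcard, hnone⟩
    · rw [hm]
      exact hf.2.1 m c hmc
    · have : f c = none := hf.2.2.2 c (lt_of_le_of_ne (hμ c) hcard)
      rw [hnone, this]

end ReserveSystem
end

section
/- If μ is a matching that complies with eligibility requirements, is non-wasteful, and respects priorities, then the vector f̲^μ defined by f̲^μ_c = min_{π_c} { i ∈ μ(I) : i π_c x_c } if x_c := max_{π_c}((I ∖ μ(I)) ∪ {∅}) is not ∅ and f̲^μ_c = ∅ otherwise, is the minimum equilibrium cutoff vector supporting μ: (f̲^μ, μ) is a cutoff equilibrium, and for every cutoff equilibrium (f, μ) and every category c, f_c weakly-π_c f̲^μ_c. -/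
open Finset

section ReserveSystem

variable {I C : Type*} [Fintype I] [DecidableEq I] [Fintype C] [DecidableEq C]

section MinCutoff

variable {pr : C → Option I → ℕ} {r : C → ℕ} {μ : I → Option C} {f : C → Option I}

omit [Fintype I] [DecidableEq I] [Fintype C] [DecidableEq C] in
theorem IsMinCutoff.isCutoffVector (hf : IsMinCutoff pr μ f) : IsCutoffVector pr f := by
  intro c
  rcases hf c with ⟨x, -, hx, -, m, hm, -, hxm, -⟩ | ⟨-, hfc⟩
  · rw [hm]
    exact (hx.trans hxm).le
  · rw [hfc]

omit [Fintype I] [DecidableEq I] [Fintype C] [DecidableEq C] in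
theorem IsMinCutoff.inBudget_of_eq_some (hf : IsMinCutoff pr μ f)
    (helig : CompliesEligibility pr μ) (hprio : RespectsPriorities pr μ) {i : I} {c : C}
    (hi : μ i = some c) : InBudget pr f i c := by
  rcases hf c with ⟨x, hx, -, -, m, hm, -, -, hm_min⟩ | ⟨-, hfc⟩
  · rw [InBudget, hm]
    exact hm_min i (by simp [hi]) (hprio i x c hi hx)
  · rw [InBudget, hfc]
    exact (helig i c hi).le

omit [Fintype I] [DecidableEq I] [Fintype C] [DecidableEq C] in
theorem IsMinCutoff.lt_of_eq_none (hf : IsMinCutoff pr μ f) {i : I} (hi : μ i = none) (c : C) :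
    pr c (some i) < pr c (f c) := by
  rcases hf c with ⟨x, -, -, hx_max, m, hm, -, hxm, -⟩ | ⟨hnone, hfc⟩
  · rw [hm]
    exact (hx_max i hi).trans_lt hxm
  · rw [hfc]
    exact hnone i hi

omit [DecidableEq I] [Fintype C] in
theorem IsMinCutoff.eq_none_of_card_lt (hf : IsMinCutoff pr μ f)
    (hnw : NonWasteful pr r μ) {c : C}
    (hc : (univ.filter (fun i => μ i = some c)).card < r c) : f c = none := by
  rcases hf c with ⟨x, hx, hx_elig, -⟩ | ⟨-, hfc⟩
  · exact absurd (hnw x c hx_elig hx) hc.ne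
  · exact hfc

omit [DecidableEq I] [Fintype C] in
theorem IsMinCutoff.cutoffEquilibrium (hf : IsMinCutoff pr μ f)
    (helig : CompliesEligibility pr μ) (hnw : NonWasteful pr r μ)
    (hprio : RespectsPriorities pr μ) : CutoffEquilibrium pr r f μ := by
  refine ⟨hf.isCutoffVector, fun i c => hf.inBudget_of_eq_some helig hprio,
    fun i ⟨c, hc⟩ => ?_, fun c => hf.eq_none_of_card_lt hnw⟩
  cases hi : μ i with
  | none => exact absurd hc (hf.lt_of_eq_none hi c).not_ge
  | some c' => exact ⟨c', rfl, hf.inBudget_of_eq_some helig hprio hi⟩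

omit [DecidableEq I] [Fintype C] in
theorem CutoffEquilibrium.lt_of_eq_none (hf : CutoffEquilibrium pr r f μ) {i : I}
    (hi : μ i = none) (c : C) : pr c (some i) < pr c (f c) := by
  by_contra! hc
  obtain ⟨c', hc', -⟩ := hf.2.2.1 i ⟨c, hc⟩
  simp [hi] at hc'

/- An equilibrium cutoff lies strictly above the unmatched `x_c`, hence is a matched patient
above `x_c`, and `f c` is the least of those. -/
omit [DecidableEq I] [Fintype C] in
theorem IsMinCutoff.le_of_cutoffEquilibrium {g : C → Option I} (hf : IsMinCutoff pr μ f)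
    (hg : CutoffEquilibrium pr r g μ) (c : C) : pr c (f c) ≤ pr c (g c) := by
  rcases hf c with ⟨x, hx, hx_elig, hx_max, m, hm, -, -, hm_min⟩ | ⟨-, hfc⟩
  · have hxg := hg.lt_of_eq_none hx c
    rw [hm]
    cases hgc : g c with
    | none => exact absurd (hx_elig.trans (hgc ▸ hxg)) (lt_irrefl _)
    | some j =>
      rw [hgc] at hxg
      exact hm_min j (fun hj => (hx_max j hj).not_gt hxg) hxg
  · rw [hfc]
    exact hg.1 c

end MinCutoff

theorem min_cutoff_is_minimum_equilibrium_general
    (pr : C → Option I → ℕ)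
    (r : C → ℕ) (μ : I → Option C)
    (h1 : CompliesEligibility pr μ) (h2 : NonWasteful pr r μ)
    (h3 : RespectsPriorities pr μ)
    (fmin : C → Option I) (hfmin : IsMinCutoff pr μ fmin) :
    CutoffEquilibrium pr r fmin μ ∧
      ∀ f : C → Option I, CutoffEquilibrium pr r f μ →
        ∀ c, pr c (fmin c) ≤ pr c (f c) :=
  ⟨hfmin.cutoffEquilibrium h1 h2 h3, fun _ hf => hfmin.le_of_cutoffEquilibrium hf⟩

/-- `f̲^μ` is the minimum equilibrium cutoff vector supporting `μ`. -/
theorem min_cutoff_is_minimum_equilibrium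
    (pr : C → Option I → ℕ) (hpr : ∀ c, Function.Injective (pr c))
    (r : C → ℕ) (μ : I → Option C) (hμ : IsMatching r μ)
    (h1 : CompliesEligibility pr μ) (h2 : NonWasteful pr r μ)
    (h3 : RespectsPriorities pr μ)
    (fmin : C → Option I) (hfmin : IsMinCutoff pr μ fmin) :
    CutoffEquilibrium pr r fmin μ ∧
      ∀ f : C → Option I, CutoffEquilibrium pr r f μ →
        ∀ c, pr c (fmin c) ≤ pr c (f c) :=
  min_cutoff_is_minimum_equilibrium_general pr r μ h1 h2 h3 fmin hfmin

end ReserveSystem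
end

section
/- If (f, μ) and (g, μ) are two cutoff equilibria supporting the same matching μ with f_c weakly-π_c g_c for every category c, then for any cutoff vector h satisfying f_c weakly-π_c h_c weakly-π_c g_c for every category c, the pair (h, μ) is also a cutoff equilibrium. In other words, the set of equilibrium cutoff vectors supporting a fixed matching is an order interval (a lattice interval) with respect to the componentwise priority orders. -/
open Finset

section ReserveSystem

variable {I C : Type*} [Fintype I] [DecidableEq I] [Fintype C] [DecidableEq C]

/-- The set of equilibrium cutoff vectors supporting a fixed matching is an order
interval: if `(f, μ)` and `(g, μ)` are cutoff equilibria with `f_c ⪰_{π_c} g_c` for every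
`c`, then any cutoff vector `h` lying componentwise between `g` and `f` also supports
`μ` at a cutoff equilibrium. -/
theorem cutoff_equilibria_order_interval
    (pr : C → Option I → ℕ) (hpr : ∀ c, Function.Injective (pr c))
    (r : C → ℕ) (μ : I → Option C) (hμ : IsMatching r μ)
    (f g h : C → Option I)
    (hf : CutoffEquilibrium pr r f μ) (hg : CutoffEquilibrium pr r g μ)
    (hfg : ∀ c, pr c (g c) ≤ pr c (f c))
    (hbetween : ∀ c, pr c (g c) ≤ pr c (h c) ∧ pr c (h c) ≤ pr c (f c)) :
    CutoffEquilibrium pr r h μ := by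
  obtain ⟨hfv, hfm, hfb, hfc⟩ := hf
  obtain ⟨hgv, hgm, hgb, hgc⟩ := hg
  refine ⟨fun c => le_trans (hgv c) (hbetween c).1,
    fun i c hic => le_trans (hbetween c).2 (hfm i c hic),
    fun i ⟨c, hc⟩ => ?_,
    fun c hc => ?_⟩
  · obtain ⟨c', hc', hbc'⟩ := hgb i ⟨c, le_trans (hbetween c).1 hc⟩
    exact ⟨c', hc', le_trans (hbetween c').2 (hfm i c' hc')⟩
  · have hfn := hfc c hc
    apply hpr c
    have h1 : pr c (h c) ≤ pr c none := hfn ▸ (hbetween c).2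
    have h2 : pr c none ≤ pr c (h c) := le_trans (hgv c) (hbetween c).1
    exact le_antisymm h1 h2

end ReserveSystem
end

section
/- A matching complies with eligibility requirements, is non-wasteful, and respects priorities if and only if it is DA-induced, i.e., it is the outcome of the patient-proposing deferred acceptance algorithm for some profile of strict patient preferences over categories in which each patient ranks exactly the categories for which she is eligible above the empty set. -/
/-!
A deferred acceptance outcome satisfies the three axioms because rejections are final in a strong
sense: once `c` rejects `i`, in every later round at least `r c` applicants of higher priority
than `i` hold `c`, since the `r c` best applicants of a round are never rejected in it. So in
the end `c` is filled by patients who outrank every eligible patient it rejected.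

Conversely, let every patient matched by `μ` rank her assigned category first. Matched patients
are then never rejected: as `μ` respects priorities, only patients matched to `c` apply to `c`
with priority above one of them, and there are at most `r c` of these. An unmatched patient is
rejected in every round, since by non-wastefulness the category she applies to receives the
`r c` patients matched to it, all of higher priority. After `|C|` rounds she has exhausted her
eligible categories, so deferred acceptance returns `μ`.
-/

open Finset

section ReserveSystem

variable {I C : Type*} [Fintype I] [DecidableEq I] [Fintype C] [DecidableEq C]

/-- Patient `i`'s proposal given the set `R` of categories that have rejected her so far:
her most preferred (w.r.t. her preference scores `up i`) eligible category outside `R`. -/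
noncomputable def propose (pr : C → Option I → ℕ) (up : I → C → ℕ) (i : I)
    (R : Finset C) : Option C :=
  if h : (univ.filter (fun c => Elig pr c i ∧ c ∉ R)).Nonempty then
    some (Classical.choose
      (Finset.exists_max_image (univ.filter (fun c => Elig pr c i ∧ c ∉ R)) (up i) h))
  else none

/-- One round of the patient-proposing deferred acceptance algorithm, acting on the
profile of rejection sets: every patient proposes to her best remaining eligible
category, and each category `c` tentatively keeps its `r c` highest-`π_c`-priority
applicants, permanently rejecting the rest. -/
noncomputable def daStep (pr : C → Option I → ℕ) (r : C → ℕ) (up : I → C → ℕ)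
    (R : I → Finset C) : I → Finset C :=
  fun i =>
    match propose pr up i (R i) with
    | none => R i
    | some c =>
        if ((univ.filter (fun j => propose pr up j (R j) = some c ∧
              pr c (some i) < pr c (some j))).card < r c) then R i
        else insert c (R i)

/-- The outcome of the patient-proposing deferred acceptance algorithm: rounds are
iterated until no rejection occurs (a fixed point is reached after at most
`|I| ⬝ |C|` rounds), and each patient is matched to her final tentative assignment. -/
noncomputable def daOutcome (pr : C → Option I → ℕ) (r : C → ℕ) (up : I → C → ℕ) :
    I → Option C :=
  fun i =>
    propose pr up i
      ((daStep pr r up)^[Fintype.card I * Fintype.card C + 1] (fun _ => ∅) i)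

end ReserveSystem

theorem Finset.min_le_card_filter_card_filter_lt {α β : Type*} [LinearOrder β]
    (S : Finset α) (f : α → β) (k : ℕ) :
    min k #S ≤ #{s ∈ S | #{j ∈ S | f s < f j} < k} := by
  classical
  set T := {s ∈ S | #{j ∈ S | f s < f j} < k}
  by_cases hST : S ⊆ T
  · exact (min_le_right _ _).trans (card_le_card hST)
  -- The `f`-largest element outside `T` has all its `f`-superiors in `T`.
  obtain ⟨m, hm, hmax⟩ := exists_max_image (S \ T) f (sdiff_nonempty.2 hST)
  obtain ⟨hmS, hmT⟩ := mem_sdiff.1 hm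
  have habove : {j ∈ S | f m < f j} ⊆ T := fun j hj => by
    obtain ⟨hjS, hlt⟩ := mem_filter.1 hj
    by_contra hjT
    exact (hmax j (mem_sdiff.2 ⟨hjS, hjT⟩)).not_gt hlt
  have hk : k ≤ #{j ∈ S | f m < f j} := by
    simpa [T, hmS] using hmT
  exact (min_le_left _ _).trans (hk.trans (card_le_card habove))

section DeferredAcceptance

variable {I C : Type*} [Fintype C] [DecidableEq C]
variable {pr : C → Option I → ℕ} {r : C → ℕ} {up : I → C → ℕ}

def eligibles (pr : C → Option I → ℕ) (i : I) : Finset C := {c | Elig pr c i}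

section Propose

variable {i : I} {R : Finset C} {c : C}

lemma propose_spec (h : propose pr up i R = some c) :
    Elig pr c i ∧ c ∉ R ∧ ∀ c', Elig pr c' i → c' ∉ R → up i c' ≤ up i c := by
  unfold propose at h
  split_ifs at h with hne
  obtain ⟨hmem, hmax⟩ := Classical.choose_spec (exists_max_image _ (up i) hne)
  rw [Option.some_inj.1 h] at hmem hmax
  simp only [mem_filter, mem_univ, true_and] at hmem
  exact ⟨hmem.1, hmem.2, fun c' h1 h2 => hmax c' (by simp [h1, h2])⟩

lemma propose_eq_none_iff : propose pr up i R = none ↔ eligibles pr i ⊆ R := by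
  simp [propose, eligibles, Finset.subset_iff, Finset.Nonempty]

lemma propose_eq_some_of_forall_le (hinj : Function.Injective (up i)) (hc : Elig pr c i)
    (hcR : c ∉ R) (hmax : ∀ c', Elig pr c' i → c' ∉ R → up i c' ≤ up i c) :
    propose pr up i R = some c := by
  cases hp : propose pr up i R with
  | none => exact absurd (propose_eq_none_iff.1 hp (by simpa [eligibles] using hc)) hcR
  | some m =>
    obtain ⟨hm, hmR, hmmax⟩ := propose_spec hp
    rw [hinj (le_antisymm (hmax m hm hmR) (hmmax c hc hcR))]

end Propose

-- The bonus `card C` exceeds every value of the enumeration `equivFin C`, so the assigned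
-- category is ranked first.
noncomputable def preferMatch (μ : I → Option C) (i : I) (c : C) : ℕ :=
  (if μ i = some c then Fintype.card C else 0) + Fintype.equivFin C c

lemma preferMatch_injective (μ : I → Option C) (i : I) : Function.Injective (preferMatch μ i) := by
  intro c c' h
  have := (Fintype.equivFin C c).isLt
  have := (Fintype.equivFin C c').isLt
  have hval : (Fintype.equivFin C c : ℕ) = Fintype.equivFin C c' := by
    unfold preferMatch at h
    split_ifs at h <;> omega
  exact (Fintype.equivFin C).injective (Fin.ext hval)

lemma propose_preferMatch_empty {μ : I → Option C} (hCE : CompliesEligibility pr μ) {i : I}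
    {c : C} (h : μ i = some c) : propose pr (preferMatch μ) i ∅ = some c := by
  refine propose_eq_some_of_forall_le (preferMatch_injective μ i) (hCE i c h) (notMem_empty c)
    fun c' _ _ => ?_
  rcases eq_or_ne c' c with rfl | hc'
  · exact le_rfl
  have := (Fintype.equivFin C c').isLt
  rw [preferMatch, preferMatch, if_pos h, if_neg (by simpa [h] using hc'.symm)]
  omega

variable [Fintype I]

noncomputable def proposersAbove (pr : C → Option I → ℕ) (up : I → C → ℕ)
    (R : I → Finset C) (c : C) (v : ℕ) : Finset I :=
  {j | propose pr up j (R j) = some c ∧ v < pr c (some j)}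

noncomputable def daRejections (pr : C → Option I → ℕ) (r : C → ℕ) (up : I → C → ℕ)
    (t : ℕ) : I → Finset C :=
  (daStep pr r up)^[t] (fun _ => ∅)

lemma daRejections_succ (t : ℕ) :
    daRejections pr r up (t + 1) = daStep pr r up (daRejections pr r up t) :=
  Function.iterate_succ_apply' _ _ _

lemma daOutcome_apply (i : I) :
    daOutcome pr r up i =
      propose pr up i (daRejections pr r up (Fintype.card I * Fintype.card C + 1) i) :=
  rfl

section Step

variable {R : I → Finset C} {i : I} {c : C}

lemma daStep_of_propose_eq_none (hp : propose pr up i (R i) = none) :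
    daStep pr r up R i = R i := by
  simp [daStep, hp]

lemma daStep_of_card_lt (hp : propose pr up i (R i) = some c)
    (h : #(proposersAbove pr up R c (pr c (some i))) < r c) :
    daStep pr r up R i = R i := by
  simp only [proposersAbove] at h
  simp [daStep, hp, h]

lemma daStep_of_le_card (hp : propose pr up i (R i) = some c)
    (h : r c ≤ #(proposersAbove pr up R c (pr c (some i)))) :
    daStep pr r up R i = insert c (R i) := by
  simp only [proposersAbove] at h
  simp [daStep, hp, not_lt.2 h]

lemma le_card_proposersAbove_of_mem_daStep (hcR : c ∉ R i) (hc : c ∈ daStep pr r up R i) :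
    r c ≤ #(proposersAbove pr up R c (pr c (some i))) := by
  cases hp : propose pr up i (R i) with
  | none => exact absurd (daStep_of_propose_eq_none hp ▸ hc) hcR
  | some d =>
    by_cases hlt : #(proposersAbove pr up R d (pr d (some i))) < r d
    · exact absurd (daStep_of_card_lt hp hlt ▸ hc) hcR
    · rw [daStep_of_le_card hp (not_lt.1 hlt), mem_insert] at hc
      obtain rfl := hc.resolve_right hcR
      exact not_lt.1 hlt

end Step

lemma min_le_card_proposersAbove_daStep (R : I → Finset C) (c : C) (v : ℕ) :
    min (r c) #(proposersAbove pr up R c v) ≤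
      #(proposersAbove pr up (daStep pr r up R) c v) := by
  set S := proposersAbove pr up R c v
  refine (S.min_le_card_filter_card_filter_lt (fun j => pr c (some j)) (r c)).trans
    (card_le_card fun s hs => ?_)
  obtain ⟨hsS, hkept⟩ := mem_filter.1 hs
  obtain ⟨hps, hvs⟩ := (mem_filter.1 hsS).2
  -- Above `s`, the applicants to `c` are exactly those of `S` above `s`.
  have habove : {j ∈ S | pr c (some s) < pr c (some j)} =
      proposersAbove pr up R c (pr c (some s)) := by
    ext j
    simp only [S, proposersAbove, mem_filter, mem_univ, true_and]
    exact ⟨fun ⟨⟨hj, _⟩, hlt⟩ => ⟨hj, hlt⟩, fun ⟨hj, hlt⟩ => ⟨⟨hj, hvs.trans hlt⟩, hlt⟩⟩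
  rw [habove] at hkept
  simpa [proposersAbove, daStep_of_card_lt hps hkept] using ⟨hps, hvs⟩

lemma le_card_proposersAbove_of_mem_daRejections {i : I} {c : C} {t : ℕ}
    (h : c ∈ daRejections pr r up t i) :
    r c ≤ #(proposersAbove pr up (daRejections pr r up t) c (pr c (some i))) := by
  induction t with
  | zero => simp [daRejections] at h
  | succ t ih =>
    rw [daRejections_succ] at h ⊢
    have hfull : r c ≤ #(proposersAbove pr up (daRejections pr r up t) c (pr c (some i))) := by
      by_cases hc : c ∈ daRejections pr r up t i
      · exact ih hc
      · exact le_card_proposersAbove_of_mem_daStep hc h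
    exact (le_min le_rfl hfull).trans (min_le_card_proposersAbove_daStep _ _ _)

lemma filter_daOutcome_eq_proposersAbove (hμ : IsMatching r (daOutcome pr r up)) {i : I}
    {c : C} (hc : c ∈ daRejections pr r up (Fintype.card I * Fintype.card C + 1) i) :
    ({j | daOutcome pr r up j = some c} : Finset I) =
      proposersAbove pr up (daRejections pr r up (Fintype.card I * Fintype.card C + 1)) c
        (pr c (some i)) := by
  refine (eq_of_subset_of_card_le (fun j hj => ?_) ?_).symm
  · exact mem_filter.2 ⟨mem_univ j, (mem_filter.1 hj).2.1⟩
  · exact (hμ c).trans (le_card_proposersAbove_of_mem_daRejections hc)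

lemma mem_daRejections_of_daOutcome_eq_none {i : I} {c : C} (hi : daOutcome pr r up i = none)
    (hc : Elig pr c i) : c ∈ daRejections pr r up (Fintype.card I * Fintype.card C + 1) i :=
  propose_eq_none_iff.1 hi (by simpa [eligibles] using hc)

theorem compliesEligibility_daOutcome : CompliesEligibility pr (daOutcome pr r up) :=
  fun _ _ h => (propose_spec h).1

theorem nonWasteful_daOutcome (hμ : IsMatching r (daOutcome pr r up)) :
    NonWasteful pr r (daOutcome pr r up) := fun i c hc hi => by
  have hR := mem_daRejections_of_daOutcome_eq_none hi hc
  refine le_antisymm (hμ c) ?_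
  rw [filter_daOutcome_eq_proposersAbove hμ hR]
  exact le_card_proposersAbove_of_mem_daRejections hR

theorem respectsPriorities_daOutcome (hμ : IsMatching r (daOutcome pr r up)) :
    RespectsPriorities pr (daOutcome pr r up) := fun i i' c hi hi' => by
  by_cases hc : Elig pr c i'
  · have hmem : i ∈ ({j | daOutcome pr r up j = some c} : Finset I) := by simpa using hi
    rw [filter_daOutcome_eq_proposersAbove hμ (mem_daRejections_of_daOutcome_eq_none hi' hc)]
      at hmem
    exact (mem_filter.1 hmem).2.2
  · exact (not_lt.1 hc).trans_lt (propose_spec hi).1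

section Forward

variable {μ : I → Option C} {R : I → Finset C} {i : I} {c : C}

lemma daStep_eq_self_of_eq_some (hμ : IsMatching r μ) (hRP : RespectsPriorities pr μ)
    (hR : ∀ j d, μ j = some d → propose pr up j (R j) = some d) (hi : μ i = some c) :
    daStep pr r up R i = R i := by
  refine daStep_of_card_lt (hR i c hi) ?_
  -- Only patients matched to `c` apply to `c` above `i`, and `i` is one of those.
  have hsub : proposersAbove pr up R c (pr c (some i)) ⊆ ({j | μ j = some c} : Finset I) := by
    intro j hj
    obtain ⟨hpj, hlt⟩ := (mem_filter.1 hj).2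
    refine mem_filter.2 ⟨mem_univ j, ?_⟩
    cases hj : μ j with
    | none => exact absurd (hRP i j c hi hj) hlt.not_gt
    | some d => rw [← hR j d hj, hpj]
  have hssub : proposersAbove pr up R c (pr c (some i)) ⊂ ({j | μ j = some c} : Finset I) :=
    (ssubset_iff_of_subset hsub).2 ⟨i, by simpa using hi, by simp [proposersAbove]⟩
  exact (card_lt_card hssub).trans_le (hμ c)

lemma daStep_eq_insert_of_eq_none (hNW : NonWasteful pr r μ) (hRP : RespectsPriorities pr μ)
    (hR : ∀ j d, μ j = some d → propose pr up j (R j) = some d) (hi : μ i = none)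
    (hp : propose pr up i (R i) = some c) :
    daStep pr r up R i = insert c (R i) := by
  refine daStep_of_le_card hp ?_
  rw [← hNW i c (propose_spec hp).1 hi]
  exact card_le_card fun j hj => by
    have hj : μ j = some c := (mem_filter.1 hj).2
    simpa [proposersAbove] using ⟨hR j c hj, hRP j i c hj hi⟩

variable (hμ : IsMatching r μ) (hNW : NonWasteful pr r μ) (hRP : RespectsPriorities pr μ)
  (hfirst : ∀ j d, μ j = some d → propose pr up j ∅ = some d)
include hμ hRP hfirst

lemma daRejections_eq_empty_of_eq_some (t : ℕ) (hi : μ i = some c) :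
    daRejections pr r up t i = ∅ := by
  induction t generalizing i c with
  | zero => rfl
  | succ t ih =>
    have hR : ∀ j d, μ j = some d → propose pr up j (daRejections pr r up t j) = some d :=
      fun j d hj => by rw [ih hj, hfirst j d hj]
    rw [daRejections_succ, daStep_eq_self_of_eq_some hμ hRP hR hi, ih hi]

include hNW

lemma daRejections_subset_eligibles_and_min_le_card (hi : μ i = none) (t : ℕ) :
    daRejections pr r up t i ⊆ eligibles pr i ∧
      min t #(eligibles pr i) ≤ #(daRejections pr r up t i) := by
  induction t with
  | zero => simp [daRejections]
  | succ t ih =>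
    obtain ⟨hsub, hcard⟩ := ih
    rw [daRejections_succ]
    cases hp : propose pr up i (daRejections pr r up t i) with
    | none =>
      rw [daStep_of_propose_eq_none hp, subset_antisymm hsub (propose_eq_none_iff.1 hp)]
      exact ⟨subset_rfl, min_le_right _ _⟩
    | some c =>
      have hR : ∀ j d, μ j = some d → propose pr up j (daRejections pr r up t j) = some d :=
        fun j d hj => by rw [daRejections_eq_empty_of_eq_some hμ hRP hfirst t hj, hfirst j d hj]
      obtain ⟨hc, hcR, -⟩ := propose_spec hp
      rw [daStep_eq_insert_of_eq_none hNW hRP hR hi hp, card_insert_of_notMem hcR]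
      refine ⟨insert_subset (by simpa [eligibles] using hc) hsub, ?_⟩
      omega

lemma daRejections_eq_eligibles_of_eq_none (hi : μ i = none) {t : ℕ}
    (ht : Fintype.card C ≤ t) : daRejections pr r up t i = eligibles pr i := by
  obtain ⟨hsub, hcard⟩ := daRejections_subset_eligibles_and_min_le_card hμ hNW hRP hfirst hi t
  refine eq_of_subset_of_card_le hsub ?_
  have : #(eligibles pr i) ≤ t := (card_le_univ _).trans ht
  omega

theorem daOutcome_eq_of_propose_empty : daOutcome pr r up = μ := by
  funext i
  have hN : Fintype.card C ≤ Fintype.card I * Fintype.card C + 1 :=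
    (Nat.le_mul_of_pos_left _ (Fintype.card_pos_iff.2 ⟨i⟩)).trans (Nat.le_succ _)
  rw [daOutcome_apply]
  cases hi : μ i with
  | none =>
    rw [propose_eq_none_iff, daRejections_eq_eligibles_of_eq_none hμ hNW hRP hfirst hi hN]
  | some c => rw [daRejections_eq_empty_of_eq_some hμ hRP hfirst _ hi, hfirst i c hi]

end Forward

end DeferredAcceptance

section ReserveSystem

variable {I C : Type*} [Fintype I] [DecidableEq I] [Fintype C] [DecidableEq C]

theorem da_characterization_general
    (pr : C → Option I → ℕ)
    (r : C → ℕ) (μ : I → Option C) (hμ : IsMatching r μ) :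
    (CompliesEligibility pr μ ∧ NonWasteful pr r μ ∧ RespectsPriorities pr μ) ↔
      ∃ up : I → C → ℕ, (∀ i, Function.Injective (up i)) ∧ μ = daOutcome pr r up := by
  constructor
  · rintro ⟨hCE, hNW, hRP⟩
    exact ⟨preferMatch μ, preferMatch_injective μ,
      (daOutcome_eq_of_propose_empty hμ hNW hRP fun _ _ => propose_preferMatch_empty hCE).symm⟩
  · rintro ⟨up, -, rfl⟩
    exact ⟨compliesEligibility_daOutcome, nonWasteful_daOutcome hμ,
      respectsPriorities_daOutcome hμ⟩

/-- Theorem 2: a matching satisfies the three axioms iff it is DA-induced, i.e., it is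
the deferred acceptance outcome for some profile of strict patient preferences over
categories (encoded by injective score functions `up i`, each patient ranking exactly
her eligible categories above the empty set). -/
theorem da_characterization
    (pr : C → Option I → ℕ) (hpr : ∀ c, Function.Injective (pr c))
    (r : C → ℕ) (μ : I → Option C) (hμ : IsMatching r μ) :
    (CompliesEligibility pr μ ∧ NonWasteful pr r μ ∧ RespectsPriorities pr μ) ↔
      ∃ up : I → C → ℕ, (∀ i, Function.Injective (up i)) ∧ μ = daOutcome pr r up :=
  da_characterization_general pr r μ hμ

end ReserveSystem
end

section
/- Fix an order of precedence ▷ over the categories and let ≻^▷ be the patient preference profile in which each patient ranks categories according to ▷ (with only eligible categories above ∅). Then the sequential reserve matching φ_▷ equals the outcome of the deferred acceptance algorithm applied to the preference profile ≻^▷. -/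
/-!
Under the precedence profile, deferred acceptance ends with each patient `i` rejected exactly by
the eligible categories that precede her sequential assignment. Rejections never leave these
sets: if `c` rejects `i`, then `r c` applicants outrank her at `c`, and all of them are still
unmatched when `c` is processed sequentially, so `c` does not take `i` there. Conversely, once the
rounds reach a fixed point, induction along the precedence order shows that every such category
has rejected `i`: since `c` passes over `i` sequentially, it takes `r c` patients of higher
priority, and each of them applies to `c` in deferred acceptance. Proposing to the best category
outside these sets then returns the sequential assignment.
-/

open Finset

section ReserveSystem

variable {I C : Type*} [Fintype I] [DecidableEq I] [Fintype C] [DecidableEq C]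

/-- Patients selected when category `c` with `k` units is processed on the pool `avail`:
the `k` highest-`π_c`-priority eligible patients (all eligible ones if fewer than `k`). -/
def seqTop (pr : C → Option I → ℕ) (c : C) (k : ℕ) (avail : Finset I) : Finset I :=
  (avail.filter (fun i => Elig pr c i)).filter (fun i =>
    ((avail.filter (fun i' => Elig pr c i')).filter
        (fun j => pr c (some i) < pr c (some j))).card < k)

/-- The sequential reserve matching induced by processing the given list of categories in
order, over the pool `avail` of patients. -/
def seqMatch (pr : C → Option I → ℕ) (r : C → ℕ) : List C → Finset I → I → Option C
  | [], _, _ => none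
  | c :: L, avail, i =>
      if i ∈ seqTop pr c (r c) avail then some c
      else seqMatch pr r L (avail \ seqTop pr c (r c) avail) i

end ReserveSystem

theorem le_card_filter_top_of_le_card_filter {α β : Type*} [LinearOrder β] {P : Finset α}
    {f : α → β} {k : ℕ} {x : α} (hxk : k ≤ #{j ∈ P | f x < f j}) :
    k ≤ #{j ∈ {j ∈ P | #{j' ∈ P | f j < f j'} < k} | f x < f j} := by
  set S := {j ∈ P | #{j' ∈ P | f j < f j'} < k}
  by_cases hout : ({j ∈ P | f x < f j ∧ j ∉ S} : Finset α).Nonempty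
  · -- the highest element above `x` left out of `S` has `k` elements above it, all in `S`
    obtain ⟨y, hy, hmax⟩ := exists_max_image _ f hout
    simp only [mem_filter, S, not_and, not_lt] at hy hmax
    refine (hy.2.2 hy.1).trans (card_le_card fun j hj => ?_)
    simp only [mem_filter] at hj ⊢
    refine ⟨?_, hy.2.1.trans hj.2⟩
    by_contra hjS
    exact (hmax j ⟨hj.1, hy.2.1.trans hj.2, fun hjP => by simpa [S, hjP] using hjS⟩).not_gt hj.2
  · refine hxk.trans (card_le_card fun j hj => ?_)
    simp only [mem_filter, not_nonempty_iff_eq_empty, filter_eq_empty_iff, not_and,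
      not_not] at hj hout ⊢
    exact ⟨hout hj.1 hj.2, hj.2⟩

theorem Function.isFixedPt_iterate_succ_of_bounded_measure {α : Type*} {f : α → α}
    (μ : α → ℕ) {B : ℕ} (hB : ∀ x, μ x ≤ B) (hf : ∀ x, f x ≠ x → μ x < μ (f x))
    (x : α) :
    Function.IsFixedPt f (f^[B + 1] x) := by
  have fixed_or_large : ∀ n, Function.IsFixedPt f (f^[n] x) ∨ n ≤ μ (f^[n] x) := by
    intro n
    induction n with
    | zero => exact Or.inr (Nat.zero_le _)
    | succ n ih =>
      rw [Function.iterate_succ_apply']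
      by_cases hfix : Function.IsFixedPt f (f^[n] x)
      · left
        rw [hfix.eq]
        exact hfix
      · exact Or.inr ((ih.resolve_left hfix).trans_lt (hf _ hfix))
  exact (fixed_or_large (B + 1)).resolve_right fun h => by have := hB (f^[B + 1] x); omega

section SeqTop

variable {I C : Type*} (pr : C → Option I → ℕ)

theorem mem_seqTop {c : C} {k : ℕ} {avail : Finset I} {i : I} :
    i ∈ seqTop pr c k avail ↔ (i ∈ avail ∧ Elig pr c i) ∧
      #{j ∈ avail | Elig pr c j ∧ pr c (some i) < pr c (some j)} < k := by
  simp only [seqTop, mem_filter, filter_filter, and_assoc]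

theorem seqTop_subset (c : C) (k : ℕ) (avail : Finset I) : seqTop pr c k avail ⊆ avail :=
  fun _ hi => ((mem_seqTop pr).1 hi).1.1

theorem le_card_seqTop_filter {c : C} {k : ℕ} {avail : Finset I} {i : I} (hi : i ∈ avail)
    (hci : Elig pr c i) (hiT : i ∉ seqTop pr c k avail) :
    k ≤ #{j ∈ seqTop pr c k avail | pr c (some i) < pr c (some j)} := by
  refine le_card_filter_top_of_le_card_filter ?_
  simpa [seqTop, hi, hci] using hiT

end SeqTop

section Sequential

variable {I C : Type*} [DecidableEq I] (pr : C → Option I → ℕ) (r : C → ℕ)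

theorem mem_and_elig_of_seqMatch_eq_some :
    ∀ {L : List C} {avail : Finset I} {i : I} {c : C},
      seqMatch pr r L avail i = some c → c ∈ L ∧ Elig pr c i
  | [], _, _, _, h => by simp [seqMatch] at h
  | c' :: L, avail, i, c, h => by
      rw [seqMatch] at h
      split_ifs at h with hi
      · cases h
        exact ⟨List.mem_cons_self, ((mem_seqTop pr).1 hi).1.2⟩
      · obtain ⟨hcL, hci⟩ := mem_and_elig_of_seqMatch_eq_some h
        exact ⟨List.mem_cons_of_mem _ hcL, hci⟩

variable [DecidableEq C]

/-- The pool of patients still unmatched when category `c` is processed. -/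
def seqPool : List C → Finset I → C → Finset I
  | [], avail, _ => avail
  | c' :: L, avail, c =>
      if c = c' then avail else seqPool L (avail \ seqTop pr c' (r c') avail) c

theorem seqPool_subset :
    ∀ (L : List C) (avail : Finset I) (c : C), seqPool pr r L avail c ⊆ avail
  | [], _, _ => subset_rfl
  | c' :: L, avail, c => by
      rw [seqPool]
      split_ifs
      · exact subset_rfl
      · exact (seqPool_subset L _ c).trans sdiff_subset

theorem seqMatch_eq_some_iff :
    ∀ {L : List C}, L.Nodup → ∀ {avail : Finset I} {c : C}, c ∈ L → ∀ {i : I},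
      seqMatch pr r L avail i = some c ↔ i ∈ seqTop pr c (r c) (seqPool pr r L avail c)
  | [], _, _, _, hc, _ => absurd hc List.not_mem_nil
  | c' :: L, hnd, avail, c, hc, i => by
      rw [List.nodup_cons] at hnd
      rw [seqMatch, seqPool]
      by_cases hcc : c = c'
      · subst hcc
        rw [if_pos rfl]
        split_ifs with hi
        · simp [hi]
        · simp only [hi, iff_false]
          exact fun h => hnd.1 (mem_and_elig_of_seqMatch_eq_some pr r h).1
      · have hcL : c ∈ L := (List.mem_cons.1 hc).resolve_left hcc
        rw [if_neg hcc, ← seqMatch_eq_some_iff hnd.2 hcL]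
        split_ifs with hi
        · simp only [Option.some.injEq, Ne.symm hcc, false_iff]
          intro h
          exact (mem_sdiff.1 (seqPool_subset pr r L _ c
            (seqTop_subset pr _ _ _ ((seqMatch_eq_some_iff hnd.2 hcL).1 h)))).2 hi
        · rfl

theorem mem_seqPool_iff :
    ∀ {L : List C}, L.Nodup → ∀ {avail : Finset I} {c : C}, c ∈ L → ∀ {i : I},
      i ∈ seqPool pr r L avail c ↔
        i ∈ avail ∧ ∀ d, seqMatch pr r L avail i = some d → L.idxOf c ≤ L.idxOf d
  | [], _, _, _, hc, _ => absurd hc List.not_mem_nil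
  | c' :: L, hnd, avail, c, hc, i => by
      rw [List.nodup_cons] at hnd
      rw [seqPool, seqMatch]
      by_cases hcc : c = c'
      · subst hcc
        simp
      · have hcL : c ∈ L := (List.mem_cons.1 hc).resolve_left hcc
        have hidx : ∀ d, seqMatch pr r L (avail \ seqTop pr c' (r c') avail) i = some d →
            (L.idxOf c ≤ L.idxOf d ↔ (c' :: L).idxOf c ≤ (c' :: L).idxOf d) := fun d hd => by
          have hdc' : c' ≠ d := fun h =>
            hnd.1 (h ▸ (mem_and_elig_of_seqMatch_eq_some pr r hd).1)
          rw [List.idxOf_cons_ne _ (Ne.symm hcc), List.idxOf_cons_ne _ hdc', Nat.succ_le_succ_iff]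
        rw [if_neg hcc, mem_seqPool_iff hnd.2 hcL]
        split_ifs with hi
        · simp [hi, List.idxOf_cons_ne _ (Ne.symm hcc)]
        · simp only [mem_sdiff, hi, not_false_eq_true, and_true]
          exact and_congr_right fun _ => forall_congr' fun d => imp_congr_right (hidx d)

end Sequential

section DeferredAcceptance

variable {I C : Type*} [Fintype C] [DecidableEq C] {pr : C → Option I → ℕ}
  {up : I → C → ℕ}

theorem propose_eq_some_iff {i : I} (hup : Function.Injective (up i)) {R : Finset C} {c : C} :
    propose pr up i R = some c ↔
      Elig pr c i ∧ c ∉ R ∧ ∀ c', Elig pr c' i → c' ∉ R → up i c' ≤ up i c := by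
  unfold propose
  split_ifs with h
  · have spec := Classical.choose_spec (exists_max_image _ (up i) h)
    generalize Classical.choose (exists_max_image _ (up i) h) = c₀ at spec ⊢
    obtain ⟨hmem, hmax⟩ := spec
    simp only [mem_filter, mem_univ, true_and, and_imp] at hmem hmax
    refine ⟨?_, fun ⟨hc, hcR, hcmax⟩ => ?_⟩
    · rintro ⟨⟩
      exact ⟨hmem.1, hmem.2, hmax⟩
    · rw [hup ((hcmax _ hmem.1 hmem.2).antisymm (hmax c hc hcR))]
  · simp only [not_nonempty_iff_eq_empty, filter_eq_empty_iff, mem_univ, true_implies,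
      not_and, not_not] at h
    simp only [false_iff, not_and]
    exact fun hc hcR => (hcR (h hc)).elim

theorem propose_eq_none_iff_s6 {i : I} {R : Finset C} :
    propose pr up i R = none ↔ ∀ c, Elig pr c i → c ∈ R := by
  unfold propose
  split_ifs with h
  · obtain ⟨c, hc⟩ := h
    simp only [mem_filter, mem_univ, true_and] at hc
    simpa using ⟨c, hc⟩
  · simpa [filter_eq_empty_iff] using h

/-- The profile `≻^▷` of the order of precedence listed by `L`. -/
def precedencePref (L : List C) : I → C → ℕ := fun _ c => L.length - L.idxOf c

theorem propose_precedence_eq_some_iff {L : List C} (hall : ∀ c : C, c ∈ L) {i : I}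
    {R : Finset C} {c : C} :
    propose pr (precedencePref L) i R = some c ↔
      Elig pr c i ∧ c ∉ R ∧ ∀ c', Elig pr c' i → L.idxOf c' < L.idxOf c → c' ∈ R := by
  have hlt : ∀ c, L.idxOf c < L.length := fun c => List.idxOf_lt_length_iff.2 (hall c)
  have hinj : Function.Injective (precedencePref L i) := fun c d h =>
    (List.idxOf_inj (hall c)).1 (by
      have := hlt c; have := hlt d; simp only [precedencePref] at h; omega)
  rw [propose_eq_some_iff hinj]
  refine and_congr_right fun _ => and_congr_right fun _ => forall_congr' fun c' => ?_
  simp only [precedencePref]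
  refine imp_congr_right fun _ => ⟨fun h hc' => ?_, fun h => ?_⟩
  · by_contra hc'R
    have := h hc'R
    have := hlt c
    omega
  · intro hc'R
    by_contra hgt
    have := hlt c'
    exact hc'R (h (by omega))

variable [Fintype I] {r : C → ℕ}

theorem mem_daStep_iff {R : I → Finset C} {i : I} {c : C} :
    c ∈ daStep pr r up R i ↔ c ∈ R i ∨ (propose pr up i (R i) = some c ∧
      r c ≤ #{j | propose pr up j (R j) = some c ∧ pr c (some i) < pr c (some j)}) := by
  unfold daStep
  rcases hp : propose pr up i (R i) with _ | d
  · simp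
  · dsimp only
    split_ifs with hd
    · simp only [Option.some.injEq, iff_self_or, and_imp]
      rintro rfl h
      omega
    · simp only [mem_insert, Option.some.injEq, not_lt] at hd ⊢
      constructor
      · rintro (rfl | h)
        · exact Or.inr ⟨rfl, hd⟩
        · exact Or.inl h
      · rintro (h | ⟨rfl, -⟩)
        · exact Or.inr h
        · exact Or.inl rfl

theorem isFixedPt_daStep_iterate :
    Function.IsFixedPt (daStep pr r up)
      ((daStep pr r up)^[Fintype.card I * Fintype.card C + 1] (fun _ => ∅)) := by
  refine Function.isFixedPt_iterate_succ_of_bounded_measure (fun R => ∑ i, #(R i))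
    (fun R => ?_) (fun R hR => ?_) _
  · calc ∑ i, #(R i) ≤ ∑ _i : I, Fintype.card C := sum_le_sum fun i _ => card_le_univ _
      _ = Fintype.card I * Fintype.card C := by simp
  · have hsub : ∀ i, R i ⊆ daStep pr r up R i := fun i c hc => mem_daStep_iff.2 (Or.inl hc)
    obtain ⟨i, hi⟩ := Function.ne_iff.1 hR
    exact sum_lt_sum (fun i _ => card_le_card (hsub i))
      ⟨i, mem_univ i, card_lt_card ((hsub i).ssubset_of_ne (Ne.symm hi))⟩

end DeferredAcceptance

section ReserveSystem

variable {I C : Type*} [Fintype I] [DecidableEq I] [Fintype C] [DecidableEq C]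

/-- The categories that have rejected `i` once deferred acceptance under the precedence
order has stopped: the eligible ones preceding her sequential assignment. -/
def seqRejected (pr : C → Option I → ℕ) (r : C → ℕ) (L : List C) (i : I) : Finset C :=
  {c | Elig pr c i ∧ ∀ d, seqMatch pr r L univ i = some d → L.idxOf c < L.idxOf d}

variable {pr : C → Option I → ℕ} {r : C → ℕ} {L : List C}

theorem mem_seqRejected {i : I} {c : C} :
    c ∈ seqRejected pr r L i ↔
      Elig pr c i ∧ ∀ d, seqMatch pr r L univ i = some d → L.idxOf c < L.idxOf d := by
  simp [seqRejected]

theorem not_mem_seqRejected_of_seqMatch_eq_some {i : I} {d : C}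
    (hd : seqMatch pr r L univ i = some d) : d ∉ seqRejected pr r L i := by
  simp [mem_seqRejected, hd]

theorem idxOf_le_of_propose_eq_some (hall : ∀ c : C, c ∈ L) {i : I}
    {R : Finset C} (hR : R ⊆ seqRejected pr r L i) {c d : C}
    (hc : propose pr (precedencePref L) i R = some c)
    (hd : seqMatch pr r L univ i = some d) : L.idxOf c ≤ L.idxOf d := by
  by_contra hlt
  have hdR := ((propose_precedence_eq_some_iff hall).1 hc).2.2 d
    (mem_and_elig_of_seqMatch_eq_some pr r hd).2 (not_le.1 hlt)
  exact not_mem_seqRejected_of_seqMatch_eq_some hd (hR hdR)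

theorem propose_seqRejected (hall : ∀ c : C, c ∈ L) (i : I) :
    propose pr (precedencePref L) i (seqRejected pr r L i) =
      seqMatch pr r L univ i := by
  rcases hm : seqMatch pr r L univ i with _ | d
  · exact propose_eq_none_iff_s6.2 fun c hc => mem_seqRejected.2 ⟨hc, by simp [hm]⟩
  · refine (propose_precedence_eq_some_iff hall).2 ⟨(mem_and_elig_of_seqMatch_eq_some pr r hm).2,
      not_mem_seqRejected_of_seqMatch_eq_some hm, fun c hc hlt => ?_⟩
    exact mem_seqRejected.2 ⟨hc, fun d' hd' => by cases hm.symm.trans hd'; exact hlt⟩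

theorem mem_seqPool_of_propose_eq_some (hnd : L.Nodup) (hall : ∀ c : C, c ∈ L) {i : I}
    {R : Finset C} (hR : R ⊆ seqRejected pr r L i) {c : C}
    (hc : propose pr (precedencePref L) i R = some c) :
    i ∈ seqPool pr r L univ c :=
  (mem_seqPool_iff pr r hnd (hall c)).2
    ⟨mem_univ i, fun _ hd => idxOf_le_of_propose_eq_some hall hR hc hd⟩

theorem daStep_subset_seqRejected (hnd : L.Nodup) (hall : ∀ c : C, c ∈ L)
    {R : I → Finset C} (hR : ∀ j, R j ⊆ seqRejected pr r L j) (i : I) :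
    daStep pr r (precedencePref L) R i ⊆ seqRejected pr r L i := by
  intro c hc
  rcases mem_daStep_iff.1 hc with hc | ⟨hp, hcard⟩
  · exact hR i hc
  refine mem_seqRejected.2 ⟨((propose_precedence_eq_some_iff hall).1 hp).1, fun d hd => ?_⟩
  refine (idxOf_le_of_propose_eq_some hall (hR i) hp hd).lt_of_ne fun hcd => ?_
  obtain rfl : c = d := (List.idxOf_inj (hall c)).1 hcd
  -- `c` keeps `i` in the sequential matching, so fewer than `r c` of its applicants beat `i`
  have hi := (mem_seqTop pr).1 ((seqMatch_eq_some_iff pr r hnd (hall c)).1 hd)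
  refine hcard.not_gt (hi.2.trans_le' (card_le_card fun j hj => ?_))
  simp only [mem_filter, mem_univ, true_and] at hj ⊢
  exact ⟨mem_seqPool_of_propose_eq_some hnd hall (hR j) hj.1,
    ((propose_precedence_eq_some_iff hall).1 hj.1).1, hj.2⟩

theorem mem_of_mem_seqRejected_of_isFixedPt (hnd : L.Nodup) (hall : ∀ c : C, c ∈ L)
    {R : I → Finset C} (hfix : Function.IsFixedPt (daStep pr r (precedencePref L)) R)
    (hR : ∀ j, R j ⊆ seqRejected pr r L j) {c : C}
    (hbefore : ∀ c' j, L.idxOf c' < L.idxOf c → c' ∈ seqRejected pr r L j → c' ∈ R j)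
    {i : I} (hc : c ∈ seqRejected pr r L i) : c ∈ R i := by
  by_contra hcR
  have hpropose : ∀ j, Elig pr c j → c ∉ R j →
      (∀ d, seqMatch pr r L univ j = some d → L.idxOf c ≤ L.idxOf d) →
      propose pr (precedencePref L) j (R j) = some c := fun j hcj hcRj hle =>
    (propose_precedence_eq_some_iff hall).2 ⟨hcj, hcRj, fun c' hc'j hlt => hbefore c' j hlt
      (mem_seqRejected.2 ⟨hc'j, fun d hd => hlt.trans_le (hle d hd)⟩)⟩
  obtain ⟨hci, hcbefore⟩ := mem_seqRejected.1 hc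
  have hiPool : i ∈ seqPool pr r L univ c :=
    (mem_seqPool_iff pr r hnd (hall c)).2 ⟨mem_univ i, fun d hd => (hcbefore d hd).le⟩
  have hiTop : i ∉ seqTop pr c (r c) (seqPool pr r L univ c) := fun h =>
    not_mem_seqRejected_of_seqMatch_eq_some ((seqMatch_eq_some_iff pr r hnd (hall c)).2 h) hc
  -- everyone `c` takes sequentially applies to `c` in deferred acceptance
  have hkept : {j ∈ seqTop pr c (r c) (seqPool pr r L univ c) | pr c (some i) < pr c (some j)} ⊆
      ({j | propose pr (precedencePref L) j (R j) = some c ∧ pr c (some i) < pr c (some j)} :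
        Finset I) := by
    intro j hj
    obtain ⟨hjTop, hij⟩ := mem_filter.1 hj
    have hjc := (seqMatch_eq_some_iff pr r hnd (hall c)).2 hjTop
    refine mem_filter.2 ⟨mem_univ j, hpropose j ((mem_seqTop pr).1 hjTop).1.2
      (fun h => not_mem_seqRejected_of_seqMatch_eq_some hjc (hR j h)) fun d hd => ?_, hij⟩
    cases hjc.symm.trans hd
    rfl
  have hi : c ∈ daStep pr r (precedencePref L) R i := mem_daStep_iff.2 <| Or.inr
    ⟨hpropose i hci hcR fun d hd => (hcbefore d hd).le,
      (le_card_seqTop_filter pr hiPool hci hiTop).trans (card_le_card hkept)⟩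
  exact hcR (hfix.eq ▸ hi)

theorem seqRejected_subset_of_isFixedPt (hnd : L.Nodup) (hall : ∀ c : C, c ∈ L)
    {R : I → Finset C} (hfix : Function.IsFixedPt (daStep pr r (precedencePref L)) R)
    (hR : ∀ j, R j ⊆ seqRejected pr r L j) (i : I) : seqRejected pr r L i ⊆ R i := by
  suffices h : ∀ n c j, L.idxOf c < n → c ∈ seqRejected pr r L j → c ∈ R j from
    fun c => h _ c i (Nat.lt_succ_self _)
  intro n
  induction n with
  | zero => intro c j h; omega
  | succ n ih =>
    intro c j _
    exact mem_of_mem_seqRejected_of_isFixedPt hnd hall hfix hR fun c' j' hc' => ih c' j' (by omega)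

theorem sequential_is_da_induced_general
    (pr : C → Option I → ℕ)
    (r : C → ℕ) (L : List C) (hnd : L.Nodup) (hall : ∀ c : C, c ∈ L) :
    seqMatch pr r L univ = daOutcome pr r (fun _ c => L.length - L.idxOf c) := by
  change _ = daOutcome pr r (precedencePref L)
  have hsub : ∀ n j,
      ((daStep pr r (precedencePref L))^[n] fun _ => ∅) j ⊆ seqRejected pr r L j := by
    intro n
    induction n with
    | zero => simp
    | succ n ih => rw [Function.iterate_succ_apply']; exact daStep_subset_seqRejected hnd hall ih
  have hfinal : (daStep pr r (precedencePref L))^[Fintype.card I * Fintype.card C + 1]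
      (fun _ => ∅) = seqRejected pr r L := funext fun i => (hsub _ i).antisymm
    (seqRejected_subset_of_isFixedPt hnd hall isFixedPt_daStep_iterate (hsub _) i)
  funext i
  rw [daOutcome, hfinal, propose_seqRejected hall]

/-- Proposition 1: the sequential reserve matching induced by a precedence order equals
the deferred acceptance outcome for the preference profile in which every patient ranks
the categories according to the precedence order. -/
theorem sequential_is_da_induced
    (pr : C → Option I → ℕ) (hpr : ∀ c, Function.Injective (pr c))
    (r : C → ℕ) (L : List C) (hnd : L.Nodup) (hall : ∀ c : C, c ∈ L) :
    seqMatch pr r L univ = daOutcome pr r (fun _ c => L.length - L.idxOf c) :=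
  sequential_is_da_induced_general pr r L hnd hall

end ReserveSystem
end

section
/- In a soft reserve system induced by a baseline priority order with at most five categories and where each patient is a beneficiary of at most one preferential treatment category: if ▷' is obtained from ▷ by swapping a preferential treatment category c with its immediate predecessor c' (so c is processed earlier under ▷'), then the set of beneficiaries of c matched under φ_{▷'} is contained in the set of beneficiaries of c matched under φ_▷: φ_{▷'}(I_c) ⊆ φ_▷(I_c). -/
open Finset

section ReserveSystem

variable {I C : Type*} [Fintype I] [DecidableEq I] [Fintype C] [DecidableEq C]

/-- Soft reserves induced by the baseline priority `π`: every patient is eligible for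
every category; the unreserved category `u` ranks patients by `π`; every other category
ranks its beneficiaries above non-beneficiaries and within each group by `π`. -/
def BaselineSoft (π : I → ℕ) (Ben : C → Finset I) (u : C)
    (pr : C → Option I → ℕ) : Prop :=
  (∀ c i, pr c none < pr c (some i)) ∧
  (∀ i j : I, pr u (some j) < pr u (some i) ↔ π j < π i) ∧
  (∀ c, c ≠ u → ∀ i j : I, pr c (some j) < pr c (some i) ↔
      ((i ∈ Ben c ∧ j ∉ Ben c) ∨ ((i ∈ Ben c ↔ j ∈ Ben c) ∧ π j < π i)))

end ReserveSystem

/-!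
With everybody eligible everywhere, processing a category removes the `r e` patients of the
current pool with the highest `e`-priority. Let `P₂` (resp. `P₁`) be the pool left after
`c'` and then `c` (resp. `c` and then `c'`) are processed, and let `i` be a beneficiary of `c`
in `P₂`. A counting argument shows `i ∈ P₁`; moreover `#P₁ = #P₂`, every patient of `P₁ \ P₂`
is a beneficiary of `c` with higher baseline priority than `i`, and every patient of `P₂ \ P₁`
has higher baseline priority than every patient of `P₁ ∩ P₂`.

When a later category `e ≠ c` is processed, equal pool sizes and "every extra patient of `P₁`
outranks `i` at `e`" make `i` survive in `P₁` whenever it survives in `P₂`. The invariant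
degrades along the way: after the first later category the extra patients of `P₁` are still
beneficiaries of `c`, after the second they only have higher baseline priority than `i`, and
this still lets `i` survive a third one. With at most five categories, at most three come
after `c`.
-/

namespace Selection

variable {I : Type*}

def rank (f : I → ℕ) (P : Finset I) (j : I) : ℕ := #{z ∈ P | f j < f z}

def top (f : I → ℕ) (k : ℕ) (P : Finset I) : Finset I := {j ∈ P | rank f P j < k}

variable {f : I → ℕ} {k : ℕ} {P Q : Finset I} {i j : I}

theorem mem_top : j ∈ top f k P ↔ j ∈ P ∧ rank f P j < k := mem_filter

theorem top_subset : top f k P ⊆ P := filter_subset _ _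

theorem rank_mono (h : P ⊆ Q) : rank f P j ≤ rank f Q j :=
  card_le_card (filter_subset_filter _ h)

theorem rank_le_rank_of_le (h : f i ≤ f j) : rank f P j ≤ rank f P i :=
  card_le_card (monotone_filter_right _ fun _ _ hz => h.trans_lt hz)

theorem rank_lt_rank_of_lt (hj : j ∈ P) (h : f i < f j) : rank f P j < rank f P i :=
  card_lt_card <| (ssubset_iff_of_subset (monotone_filter_right _ fun _ _ hz => h.trans hz)).2
    ⟨j, mem_filter.2 ⟨hj, h⟩, by simp⟩

theorem rank_lt_card (hj : j ∈ P) : rank f P j < #P :=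
  card_lt_card <| (ssubset_iff_of_subset (filter_subset _ _)).2 ⟨j, hj, by simp⟩

theorem rank_injOn (hf : Function.Injective f) : Set.InjOn (rank f P) P := by
  intro a ha b hb hab
  by_contra hne
  rcases lt_or_gt_of_ne (hf.ne hne) with hlt | hlt
  · exact (rank_lt_rank_of_lt hb hlt).ne' hab
  · exact (rank_lt_rank_of_lt ha hlt).ne hab

theorem image_rank (hf : Function.Injective f) : P.image (rank f P) = range #P := by
  refine eq_of_subset_of_card_le ?_ ?_
  · simpa [subset_iff] using fun j hj => rank_lt_card (f := f) hj
  · rw [card_range, card_image_of_injOn (rank_injOn hf)]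

theorem card_top (hf : Function.Injective f) : #(top f k P) = min k #P := by
  rw [← card_image_of_injOn ((rank_injOn hf).mono top_subset), top,
    ← filter_image (p := (· < k)), image_rank hf, ← card_range (min k #P)]
  congr 1
  ext n
  simp only [mem_filter, mem_range]
  omega

theorem mem_top_of_subset (hQP : Q ⊆ P) (hj : j ∈ Q) (h : j ∈ top f k P) : j ∈ top f k Q :=
  mem_top.2 ⟨hj, (rank_mono hQP).trans_lt (mem_top.1 h).2⟩

theorem lt_of_mem_top_of_notMem_top (hQP : Q ⊆ P) (hi : i ∈ Q) (hiQ : i ∉ top f k Q)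
    (hj : j ∈ top f k P) : f i < f j := by
  by_contra! hji
  exact hiQ (mem_top.2 ⟨hi, (rank_mono hQP).trans_lt
    ((rank_le_rank_of_le hji).trans_lt (mem_top.1 hj).2)⟩)

variable [DecidableEq I]

def rest (f : I → ℕ) (k : ℕ) (P : Finset I) : Finset I := P \ top f k P

theorem mem_rest : j ∈ rest f k P ↔ j ∈ P ∧ k ≤ rank f P j := by
  simp +contextual [rest, mem_top]

theorem rest_subset : rest f k P ⊆ P := sdiff_subset

theorem card_rest (hf : Function.Injective f) : #(rest f k P) = #P - k := by
  rw [rest, card_sdiff_of_subset top_subset, card_top hf]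
  omega

theorem rank_le_rank_of_forall_sdiff (h : ∀ z ∈ P \ Q, ¬ f j < f z) :
    rank f P j ≤ rank f Q j := by
  refine card_le_card fun z hz => ?_
  rw [mem_filter] at hz ⊢
  exact ⟨by_contra fun hzQ => h z (mem_sdiff.2 ⟨hz.1, hzQ⟩) hz.2, hz.2⟩

theorem rank_le_rank_of_card_eq (hcard : #P = #Q) (h : ∀ z ∈ Q \ P, f j < f z) :
    rank f P j ≤ rank f Q j := by
  have hsplit (R S : Finset I) :
      rank f R j = #({z ∈ R | f j < f z} ∩ S) + #({z ∈ R | f j < f z} \ S) :=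
    (card_inter_add_card_sdiff _ _).symm
  have hPQ : {z ∈ P | f j < f z} ∩ Q = {z ∈ Q | f j < f z} ∩ P := by
    ext
    simp only [mem_inter, mem_filter]
    tauto
  have hQP : {z ∈ Q | f j < f z} \ P = Q \ P :=
    (sdiff_subset_sdiff (filter_subset _ _) le_rfl).antisymm fun z hz =>
      mem_sdiff.2 ⟨mem_filter.2 ⟨(mem_sdiff.1 hz).1, h z hz⟩, (mem_sdiff.1 hz).2⟩
  have hle : #({z ∈ P | f j < f z} \ Q) ≤ #(P \ Q) :=
    card_le_card (sdiff_subset_sdiff (filter_subset _ _) le_rfl)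
  rw [hsplit P Q, hsplit Q P, hPQ, hQP, ← card_sdiff_comm hcard]
  omega

theorem mem_rest_of_card_eq (hcard : #P = #Q) (hi : i ∈ P) (hiQ : i ∈ rest f k Q)
    (h : ∀ y ∈ P \ Q, f i < f y) : i ∈ rest f k P := by
  rw [mem_rest] at hiQ ⊢
  exact ⟨hi, hiQ.2.trans (rank_le_rank_of_card_eq hcard.symm h)⟩

theorem mem_sdiff_or_of_mem_rest_sdiff (hj : j ∈ rest f k P \ rest f k Q) :
    j ∈ P \ Q ∨ (j ∈ top f k Q ∧ j ∈ P ∧ k ≤ rank f P j) := by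
  simp only [mem_sdiff, mem_rest, mem_top, not_and, not_le] at hj ⊢
  by_cases hjQ : j ∈ Q
  · exact Or.inr ⟨⟨hjQ, hj.2 hjQ⟩, hj.1⟩
  · exact Or.inl ⟨hj.1.1, hjQ⟩

section Swap

variable {g : I → ℕ} {k' : ℕ} {A : Finset I}

theorem lt_of_mem_top_of_mem_rest_rest (hi : i ∈ rest f k (rest g k' A))
    (hj : j ∈ top f k A) : f i < f j :=
  lt_of_mem_top_of_notMem_top rest_subset (mem_sdiff.1 hi).1 (mem_sdiff.1 hi).2 hj

theorem lt_of_mem_rest_rest_sdiff (hi : i ∈ rest f k (rest g k' A))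
    (hj : j ∈ rest g k' (rest f k A) \ rest f k (rest g k' A)) : f i < f j := by
  obtain ⟨⟨hjT, hjU₁⟩, hjP₂⟩ := mem_sdiff.1 hj |>.imp_left mem_sdiff.1
  have hjU : j ∈ rest g k' A :=
    mem_sdiff.2 ⟨rest_subset hjT, fun hjU => hjU₁ (mem_top_of_subset rest_subset hjT hjU)⟩
  have hjT₂ : j ∈ top f k (rest g k' A) := by_contra fun h => hjP₂ (mem_sdiff.2 ⟨hjU, h⟩)
  exact lt_of_mem_top_of_notMem_top subset_rfl (mem_sdiff.1 hi).1 (mem_sdiff.1 hi).2 hjT₂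

theorem mem_top_of_mem_rest_rest_sdiff
    (hj : j ∈ rest f k (rest g k' A) \ rest g k' (rest f k A)) :
    j ∈ top g k' (rest f k A) ∧ j ∉ top g k' A := by
  obtain ⟨⟨hjU, hjT₂⟩, hjP₁⟩ := mem_sdiff.1 hj |>.imp_left mem_sdiff.1
  have hjT : j ∈ rest f k A :=
    mem_sdiff.2 ⟨rest_subset hjU, fun hjT => hjT₂ (mem_top_of_subset rest_subset hjU hjT)⟩
  exact ⟨by_contra fun h => hjP₁ (mem_sdiff.2 ⟨hjT, h⟩), (mem_sdiff.1 hjU).2⟩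

theorem mem_rest_rest_swap (hf : Function.Injective f) (hg : Function.Injective g)
    (hfg : ∀ z, f i < f z → g i < g z) (hi : i ∈ rest f k (rest g k' A)) :
    i ∈ rest g k' (rest f k A) := by
  obtain ⟨hiU, hkS⟩ := mem_rest.1 hi
  obtain ⟨hiA, hk'W⟩ := mem_rest.1 hiU
  have hiT : i ∉ top f k A := fun hiT =>
    (mem_sdiff.1 hi).2 (mem_top_of_subset rest_subset hiU hiT)
  refine mem_rest.2 ⟨mem_sdiff.2 ⟨hiA, hiT⟩, ?_⟩
  -- the `g`-beaters of `i` in `A` include the `g`-top and, disjointly, the `f`-beaters left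
  -- after it; removing the at most `k` patients of the `f`-top still leaves `k'` of them
  have hUS : #(top g k' A) + rank f (rest g k' A) i ≤ rank g A i := by
    rw [rank, rank, ← card_union_of_disjoint]
    · refine card_le_card (union_subset (fun t ht => ?_) fun z hz => ?_)
      · exact mem_filter.2 ⟨top_subset ht,
          lt_of_mem_top_of_notMem_top subset_rfl hiA (mem_sdiff.1 hiU).2 ht⟩
      · obtain ⟨hz, hiz⟩ := mem_filter.1 hz
        exact mem_filter.2 ⟨rest_subset hz, hfg z hiz⟩
    · exact disjoint_of_subset_right (filter_subset _ _) disjoint_sdiff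
  have hU : #(top g k' A) = k' := by
    rw [card_top hg]
    exact min_eq_left (hk'W.trans (rank_lt_card hiA).le)
  have hT : #(top f k A) ≤ k := card_top hf ▸ min_le_left _ _
  have hW : rank g A i - #(top f k A) ≤ rank g (rest f k A) i := by
    refine (le_card_sdiff _ _).trans (card_le_card fun z hz => ?_)
    simp only [mem_sdiff, mem_filter, rest] at hz ⊢
    exact ⟨⟨hz.1.1, hz.2⟩, hz.1.2⟩
  omega

end Swap

end Selection

open Selection

section SoftReserves

variable {I C : Type*} {π : I → ℕ} {Ben : C → Finset I} {u : C} {pr : C → Option I → ℕ}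
  {c e : C} {a b : I}

def AtMostOnePreferential (Ben : C → Finset I) (u : C) : Prop :=
  ∀ (i : I) (c c' : C), c ≠ u → c' ≠ u → i ∈ Ben c → i ∈ Ben c' → c = c'

theorem AtMostOnePreferential.eq_or_notMem (h : AtMostOnePreferential Ben u) (hc : c ≠ u)
    (hec : e ≠ c) (ha : a ∈ Ben c) : e = u ∨ a ∉ Ben e :=
  or_iff_not_imp_left.2 fun he hae => hec (h a e c he hc hae ha)

namespace BaselineSoft

theorem pr_lt_of_lt (hsoft : BaselineSoft π Ben u pr) (ha : e = u ∨ a ∉ Ben e)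
    (h : π a < π b) : pr e (some a) < pr e (some b) := by
  by_cases he : e = u
  · exact he ▸ (hsoft.2.1 b a).2 h
  · rw [hsoft.2.2 e he b a]
    by_cases hb : b ∈ Ben e
    · exact Or.inl ⟨hb, ha.resolve_left he⟩
    · exact Or.inr ⟨iff_of_false hb (ha.resolve_left he), h⟩

theorem lt_of_pr_lt (hsoft : BaselineSoft π Ben u pr) (hb : e = u ∨ b ∉ Ben e)
    (h : pr e (some a) < pr e (some b)) : π a < π b := by
  by_cases he : e = u
  · exact (hsoft.2.1 b a).1 (he ▸ h)
  · rw [hsoft.2.2 e he b a] at h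
    exact (h.resolve_left fun h' => hb.resolve_left he h'.1).2

theorem pr_lt_of_notMem_of_mem (hsoft : BaselineSoft π Ben u pr) (he : e ≠ u)
    (ha : a ∉ Ben e) (hb : b ∈ Ben e) : pr e (some a) < pr e (some b) :=
  (hsoft.2.2 e he b a).2 (Or.inl ⟨hb, ha⟩)

theorem mem_of_pr_lt (hsoft : BaselineSoft π Ben u pr) (he : e ≠ u) (ha : a ∈ Ben e)
    (h : pr e (some a) < pr e (some b)) : b ∈ Ben e ∧ π a < π b := by
  rw [hsoft.2.2 e he b a] at h
  rcases h with ⟨-, h⟩ | ⟨hab, h⟩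
  · exact absurd ha h
  · exact ⟨hab.2 ha, h⟩

theorem pr_lt_of_lt_of_mem (hsoft : BaselineSoft π Ben u pr)
    (honce : AtMostOnePreferential Ben u) (hc : c ≠ u) (hec : e ≠ c) (ha : a ∈ Ben c)
    (h : π a < π b) : pr e (some a) < pr e (some b) :=
  hsoft.pr_lt_of_lt (honce.eq_or_notMem hc hec ha) h

theorem rank_le_rank_of_mem [DecidableEq I] (hsoft : BaselineSoft π Ben u pr)
    (honce : AtMostOnePreferential Ben u) (hc : c ≠ u) (he : e ≠ u) (hec : e ≠ c)
    {P Q : Finset I} (hPQ : ∀ z ∈ P \ Q, z ∈ Ben c) (hb : b ∈ Ben e) :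
    rank (pr e ∘ some) P b ≤ rank (pr e ∘ some) Q b :=
  rank_le_rank_of_forall_sdiff fun z hz => (hsoft.pr_lt_of_notMem_of_mem he
    ((honce.eq_or_notMem hc hec (hPQ z hz)).resolve_left he) hb).not_gt

end BaselineSoft

theorem seqTop_eq_top {k : ℕ} {P : Finset I} (h : ∀ j, Elig pr e j) :
    seqTop pr e k P = top (pr e ∘ some) k P := by
  rw [seqTop, filter_true_of_mem fun j _ => h j]
  rfl

variable [DecidableEq I] {r : C → ℕ}

def seqUnmatched (pr : C → Option I → ℕ) (r : C → ℕ) (L : List C) (P : Finset I) :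
    Finset I :=
  L.foldl (fun P e => rest (pr e ∘ some) (r e) P) P

@[simp]
theorem seqUnmatched_cons (L : List C) (P : Finset I) :
    seqUnmatched pr r (e :: L) P = seqUnmatched pr r L (rest (pr e ∘ some) (r e) P) := rfl

@[simp]
theorem seqUnmatched_append (L₁ L₂ : List C) (P : Finset I) :
    seqUnmatched pr r (L₁ ++ L₂) P = seqUnmatched pr r L₂ (seqUnmatched pr r L₁ P) :=
  List.foldl_append

theorem seqUnmatched_subset (L : List C) (P : Finset I) : seqUnmatched pr r L P ⊆ P := by
  induction L generalizing P with
  | nil => exact subset_rfl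
  | cons e L ih => exact (ih _).trans rest_subset

theorem seqMatch_eq_none_iff (h : ∀ e j, Elig pr e j) {L : List C} {P : Finset I} {i : I}
    (hi : i ∈ P) : seqMatch pr r L P i = none ↔ i ∈ seqUnmatched pr r L P := by
  induction L generalizing P with
  | nil => simpa [seqMatch]
  | cons e L ih =>
    rw [seqMatch, seqTop_eq_top (h e), seqUnmatched_cons]
    by_cases hiT : i ∈ top (pr e ∘ some) (r e) P
    · simp only [if_pos hiT, reduceCtorEq, false_iff]
      exact fun hiR => (mem_sdiff.1 (seqUnmatched_subset L _ hiR)).2 hiT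
    · rw [if_neg hiT]
      exact ih (mem_sdiff.2 ⟨hi, hiT⟩)

section Coupling

variable (hsoft : BaselineSoft π Ben u pr) (honce : AtMostOnePreferential Ben u) (hc : c ≠ u)
  {P₁ P₂ : Finset I} {i : I} {k : ℕ}
include hsoft honce hc

theorem mem_rest_of_extras (hec : e ≠ c) (hi : i ∈ Ben c) (hcard : #P₁ = #P₂) (hi₁ : i ∈ P₁)
    (hi₂ : i ∈ rest (pr e ∘ some) k P₂) (hext : ∀ y ∈ P₁ \ P₂, π i < π y) :
    i ∈ rest (pr e ∘ some) k P₁ :=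
  mem_rest_of_card_eq hcard hi₁ hi₂ fun y hy =>
    hsoft.pr_lt_of_lt_of_mem honce hc hec hi (hext y hy)

theorem rest_sdiff_rest_subset_of_dominated (hec : e ≠ c) (hcard : #P₁ = #P₂)
    (hext : ∀ y ∈ P₁ \ P₂, y ∈ Ben c) (hdom : ∀ x ∈ P₂ \ P₁, ∀ z ∈ P₂ ∩ P₁, π z < π x) :
    rest (pr e ∘ some) k P₁ \ rest (pr e ∘ some) k P₂ ⊆ P₁ \ P₂ := by
  intro y hy
  rcases mem_sdiff_or_of_mem_rest_sdiff hy with hy | ⟨hyT, hy₁, hky⟩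
  · exact hy
  · have hrank : rank (pr e ∘ some) P₁ y ≤ rank (pr e ∘ some) P₂ y := by
      by_cases hye : e = u ∨ y ∉ Ben e
      · exact rank_le_rank_of_card_eq hcard fun x hx =>
          hsoft.pr_lt_of_lt hye (hdom x hx y (mem_inter.2 ⟨top_subset hyT, hy₁⟩))
      · rw [not_or, not_not] at hye
        exact hsoft.rank_le_rank_of_mem honce hc hye.1 hec hext hye.2
    have := (mem_top.1 hyT).2
    omega

theorem lt_of_mem_rest_sdiff_rest (hec : e ≠ c) (hext : ∀ y ∈ P₁ \ P₂, y ∈ Ben c ∧ π i < π y)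
    (hi₂ : i ∈ rest (pr e ∘ some) k P₂) :
    ∀ y ∈ rest (pr e ∘ some) k P₁ \ rest (pr e ∘ some) k P₂, π i < π y := by
  intro y hy
  rcases mem_sdiff_or_of_mem_rest_sdiff hy with hy | ⟨hyT, -, hky⟩
  · exact (hext y hy).2
  · by_cases hye : e = u ∨ y ∉ Ben e
    · exact hsoft.lt_of_pr_lt hye <| lt_of_mem_top_of_notMem_top (f := pr e ∘ some)
        subset_rfl (mem_sdiff.1 hi₂).1 (mem_sdiff.1 hi₂).2 hyT
    · rw [not_or, not_not] at hye
      have := hsoft.rank_le_rank_of_mem honce hc hye.1 hec (fun z hz => (hext z hz).1) hye.2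
      have := (mem_top.1 hyT).2
      omega

variable {L : List C}

theorem mem_seqUnmatched_of_extras (hi : i ∈ Ben c) (hcard : #P₁ = #P₂) (hi₁ : i ∈ P₁)
    (hext : ∀ y ∈ P₁ \ P₂, π i < π y) (hL : L.length ≤ 1) (hcL : c ∉ L)
    (hi₂ : i ∈ seqUnmatched pr r L P₂) : i ∈ seqUnmatched pr r L P₁ := by
  match L, hL with
  | [], _ => exact hi₁
  | [e], _ =>
    exact mem_rest_of_extras hsoft honce hc (List.ne_of_not_mem_cons hcL).symm hi hcard hi₁
      hi₂ hext

theorem mem_seqUnmatched_of_extras_mem (hpr : ∀ e, Function.Injective (pr e))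
    (hi : i ∈ Ben c) (hcard : #P₁ = #P₂) (hi₁ : i ∈ P₁)
    (hext : ∀ y ∈ P₁ \ P₂, y ∈ Ben c ∧ π i < π y) (hL : L.length ≤ 2) (hcL : c ∉ L)
    (hi₂ : i ∈ seqUnmatched pr r L P₂) : i ∈ seqUnmatched pr r L P₁ := by
  match L, hL with
  | [], _ => exact hi₁
  | e :: L, hL =>
    have hec : e ≠ c := (List.ne_of_not_mem_cons hcL).symm
    have hi₂' : i ∈ rest (pr e ∘ some) (r e) P₂ := seqUnmatched_subset L _ hi₂
    have hinj : Function.Injective (pr e ∘ some) := (hpr e).comp (Option.some_injective I)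
    exact mem_seqUnmatched_of_extras (P₁ := rest (pr e ∘ some) (r e) P₁) hsoft honce hc hi
      (by rw [card_rest hinj, card_rest hinj, hcard])
      (mem_rest_of_extras hsoft honce hc hec hi hcard hi₁ hi₂' fun y hy => (hext y hy).2)
      (lt_of_mem_rest_sdiff_rest hsoft honce hc hec hext hi₂')
      (Nat.le_of_succ_le_succ hL) (List.not_mem_of_not_mem_cons hcL) hi₂

theorem mem_seqUnmatched_of_extras_mem_of_dominated (hpr : ∀ e, Function.Injective (pr e))
    (hi : i ∈ Ben c) (hcard : #P₁ = #P₂) (hi₁ : i ∈ P₁)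
    (hext : ∀ y ∈ P₁ \ P₂, y ∈ Ben c ∧ π i < π y)
    (hdom : ∀ x ∈ P₂ \ P₁, ∀ z ∈ P₂ ∩ P₁, π z < π x) (hL : L.length ≤ 3) (hcL : c ∉ L)
    (hi₂ : i ∈ seqUnmatched pr r L P₂) : i ∈ seqUnmatched pr r L P₁ := by
  match L, hL with
  | [], _ => exact hi₁
  | e :: L, hL =>
    have hec : e ≠ c := (List.ne_of_not_mem_cons hcL).symm
    have hi₂' : i ∈ rest (pr e ∘ some) (r e) P₂ := seqUnmatched_subset L _ hi₂
    have hinj : Function.Injective (pr e ∘ some) := (hpr e).comp (Option.some_injective I)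
    have hsub := rest_sdiff_rest_subset_of_dominated (k := r e) hsoft honce hc hec hcard
      (fun y hy => (hext y hy).1) hdom
    exact mem_seqUnmatched_of_extras_mem (P₁ := rest (pr e ∘ some) (r e) P₁) hsoft honce hc
      hpr hi (by rw [card_rest hinj, card_rest hinj, hcard])
      (mem_rest_of_extras hsoft honce hc hec hi hcard hi₁ hi₂' fun y hy => (hext y hy).2)
      (fun y hy => hext y (hsub hy)) (Nat.le_of_succ_le_succ hL)
      (List.not_mem_of_not_mem_cons hcL) hi₂

section Swap

variable {c' : C} {k' : ℕ} {A : Finset I}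

theorem baseline_lt_of_swap (hcc : c' ≠ c) (hi : i ∈ Ben c)
    (hi₂ : i ∈ rest (pr c ∘ some) k (rest (pr c' ∘ some) k' A)) :
    ∀ x ∈ rest (pr c ∘ some) k (rest (pr c' ∘ some) k' A) \
        rest (pr c' ∘ some) k' (rest (pr c ∘ some) k A),
      ∀ z ∈ rest (pr c ∘ some) k (rest (pr c' ∘ some) k' A) ∩
        rest (pr c' ∘ some) k' (rest (pr c ∘ some) k A), π z < π x := by
  intro x hx z hz
  obtain ⟨hxU₁, hxU⟩ := mem_top_of_mem_rest_rest_sdiff hx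
  have hz₁ := mem_sdiff.1 (mem_inter.1 hz).2
  have hzx : pr c' (some z) < pr c' (some x) :=
    lt_of_mem_top_of_notMem_top (f := pr c' ∘ some) subset_rfl hz₁.1 hz₁.2 hxU₁
  refine hsoft.lt_of_pr_lt (or_iff_not_imp_left.2 fun hc' hxB => hxU (mem_top.2 ⟨?_, ?_⟩)) hzx
  · exact rest_subset (rest_subset (mem_sdiff.1 hx).1)
  -- the earlier `c` step removed only beneficiaries of `c`, all ranked below `x` at `c'`
  have hT : ∀ t ∈ A \ rest (pr c ∘ some) k A, t ∈ Ben c := fun t ht =>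
    (hsoft.mem_of_pr_lt hc hi (lt_of_mem_top_of_mem_rest_rest (f := pr c ∘ some) hi₂
      (by_contra fun h => (mem_sdiff.1 ht).2 (mem_sdiff.2 ⟨(mem_sdiff.1 ht).1, h⟩)))).1
  exact (hsoft.rank_le_rank_of_mem honce hc hc' hcc hT hxB).trans_lt (mem_top.1 hxU₁).2

theorem mem_seqUnmatched_swap (hpr : ∀ e, Function.Injective (pr e)) (hcc : c' ≠ c)
    (hi : i ∈ Ben c) (hL : L.length ≤ 3) (hcL : c ∉ L)
    (hi₂ : i ∈ seqUnmatched pr r L (rest (pr c ∘ some) (r c) (rest (pr c' ∘ some) (r c') A))) :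
    i ∈ seqUnmatched pr r L (rest (pr c' ∘ some) (r c') (rest (pr c ∘ some) (r c) A)) := by
  have hf : Function.Injective (pr c ∘ some) := (hpr c).comp (Option.some_injective I)
  have hg : Function.Injective (pr c' ∘ some) := (hpr c').comp (Option.some_injective I)
  have hiP₂ := seqUnmatched_subset L _ hi₂
  refine mem_seqUnmatched_of_extras_mem_of_dominated hsoft honce hc hpr hi ?_
    (mem_rest_rest_swap hf hg (fun z hiz => hsoft.pr_lt_of_lt_of_mem honce hc hcc hi
      (hsoft.mem_of_pr_lt hc hi hiz).2) hiP₂)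
    (fun y hy => hsoft.mem_of_pr_lt hc hi (lt_of_mem_rest_rest_sdiff (f := pr c ∘ some) hiP₂ hy))
    (baseline_lt_of_swap hsoft honce hc hcc hi hiP₂) hL hcL hi₂
  rw [card_rest hf, card_rest hg, card_rest hg, card_rest hf, Nat.sub_right_comm]

end Swap

end Coupling

end SoftReserves

section ReserveSystem

variable {I C : Type*} [Fintype I] [DecidableEq I] [Fintype C] [DecidableEq C]

theorem comparative_statics_five_categories_general
    (π : I → ℕ)
    (Ben : C → Finset I) (u : C)
    (pr : C → Option I → ℕ) (hpr : ∀ c, Function.Injective (pr c))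
    (hsoft : BaselineSoft π Ben u pr)
    (honce : ∀ (i : I) (c c' : C), c ≠ u → c' ≠ u → i ∈ Ben c → i ∈ Ben c' → c = c')
    (hcard : Fintype.card C ≤ 5)
    (r : C → ℕ) (c c' : C) (hc : c ≠ u) (hne : c' ≠ c) (L1 L2 : List C)
    (hnd : (L1 ++ c' :: c :: L2).Nodup) :
    ∀ i ∈ Ben c, seqMatch pr r (L1 ++ c :: c' :: L2) univ i ≠ none →
      seqMatch pr r (L1 ++ c' :: c :: L2) univ i ≠ none := by
  intro i hi hmatched hunmatched
  have hlen : L2.length ≤ 3 := by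
    have := hnd.length_le_card
    simp only [List.length_append, List.length_cons] at this
    omega
  have hcL2 : c ∉ L2 := (hnd.sublist (List.sublist_append_right _ _)).of_cons.notMem
  refine hmatched ((seqMatch_eq_none_iff hsoft.1 (mem_univ i)).2 ?_)
  have hunmatched' := (seqMatch_eq_none_iff hsoft.1 (mem_univ i)).1 hunmatched
  simp only [seqUnmatched_append, seqUnmatched_cons] at hunmatched' ⊢
  exact mem_seqUnmatched_swap hsoft honce hc hpr hne hi hlen hcL2 hunmatched'

/-- Proposition 3: with at most five categories, soft reserves, and each patient a
beneficiary of at most one preferential treatment category, processing a preferential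
treatment category `c` earlier weakly shrinks the set of its matched beneficiaries:
`φ_{▷'}(I_c) ⊆ φ_▷(I_c)`. -/
theorem comparative_statics_five_categories
    (π : I → ℕ) (hπ : Function.Injective π)
    (Ben : C → Finset I) (u : C) (hBu : Ben u = univ)
    (pr : C → Option I → ℕ) (hpr : ∀ c, Function.Injective (pr c))
    (hsoft : BaselineSoft π Ben u pr)
    (honce : ∀ (i : I) (c c' : C), c ≠ u → c' ≠ u → i ∈ Ben c → i ∈ Ben c' → c = c')
    (hcard : Fintype.card C ≤ 5)
    (r : C → ℕ) (c c' : C) (hc : c ≠ u) (hne : c' ≠ c) (L1 L2 : List C)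
    (hnd : (L1 ++ c' :: c :: L2).Nodup)
    (hall : ∀ x : C, x ∈ L1 ++ c' :: c :: L2) :
    ∀ i ∈ Ben c, seqMatch pr r (L1 ++ c :: c' :: L2) univ i ≠ none →
      seqMatch pr r (L1 ++ c' :: c :: L2) univ i ≠ none :=
  comparative_statics_five_categories_general π Ben u pr hpr hsoft honce hcard r c c' hc hne L1 L2
    hnd

end ReserveSystem
end

section
/- With six categories, the comparative static of Proposition 3 fails: there is a soft reserve system induced by a baseline priority order with six categories (each of capacity one) and seven patients, each a beneficiary of at most one preferential treatment category, together with two orders of precedence ▷ and ▷' differing only by swapping a preferential treatment category c with its immediate predecessor c' (with c earlier under ▷'), such that φ_▷(I_c) is a strict subset of φ_{▷'}(I_c). Concretely: patients i_1 π i_2 π ... π i_7; categories u, c, c', c*, ĉ, c̃ each with capacity 1; I_c = {i_1, i_3, i_6}, I_{c*} = {i_2, i_5}, I_{c̃} = {i_4, i_7}, I_{c'} = I_{ĉ} = ∅; ▷: c' ▷ c ▷ c* ▷ ĉ ▷ c̃ ▷ u and ▷': c ▷' c' ▷' c* ▷' ĉ ▷' c̃ ▷' u. Then φ_▷(I_c)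 = {i_1, i_3} ⊊ {i_1, i_3, i_6} = φ_{▷'}(I_c). -/
open Finset

section ReserveSystem

variable {I C : Type*} [Fintype I] [DecidableEq I] [Fintype C] [DecidableEq C]

lemma seqTop_eq_singleton (pr : C → Option I → ℕ) (c : C) (avail : Finset I) (m : I)
    (hE : ∀ i, Elig pr c i) (hm : m ∈ avail)
    (hmax : ∀ j ∈ avail, j ≠ m → pr c (some j) < pr c (some m)) :
    seqTop pr c 1 avail = {m} := by
  have hfe : avail.filter (fun i => Elig pr c i) = avail :=
    filter_true_of_mem (fun i _ => hE i)
  ext i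
  simp only [seqTop, hfe, mem_filter, mem_singleton, Nat.lt_one_iff, card_eq_zero,
    filter_eq_empty_iff]
  constructor
  · rintro ⟨hi, h⟩
    by_contra hne
    exact absurd (hmax i hi hne) (h hm)
  · intro hi
    refine ⟨hi ▸ hm, fun {j} hj => ?_⟩
    by_cases hjm : j = m
    · subst hjm; rw [hi]; exact lt_irrefl _
    · rw [hi]; exact not_lt.2 (le_of_lt (hmax j hj hjm))

/-- Example 1: with six categories the comparative static of Proposition 3 fails.
Patients `0, …, 6` (in decreasing baseline priority), six categories `u = 0`, `c = 1`,
`c' = 2`, `c* = 3`, `ĉ = 4`, `c̃ = 5`, each of capacity one; beneficiary sets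
`I_c = {0, 2, 5}`, `I_{c*} = {1, 4}`, `I_{c̃} = {3, 6}`, `I_{c'} = I_{ĉ} = ∅`. Under
`▷ : c' ▷ c ▷ c* ▷ ĉ ▷ c̃ ▷ u` the matched beneficiaries of `c` are `{0, 2}`, while
under `▷' : c ▷' c' ▷' c* ▷' ĉ ▷' c̃ ▷' u` they are `{0, 2, 5}`, a strict superset. -/
theorem six_category_counterexample
    (pr : Fin 6 → Option (Fin 7) → ℕ) (hpr : ∀ c, Function.Injective (pr c))
    (Ben : Fin 6 → Finset (Fin 7))
    (hB0 : Ben 0 = univ) (hB1 : Ben 1 = {0, 2, 5}) (hB2 : Ben 2 = ∅)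
    (hB3 : Ben 3 = {1, 4}) (hB4 : Ben 4 = ∅) (hB5 : Ben 5 = {3, 6})
    (hsoft : BaselineSoft (fun i : Fin 7 => 7 - (i : ℕ)) Ben 0 pr) :
    (univ.filter (fun i => i ∈ Ben 1 ∧
        seqMatch pr (fun _ => 1) ([2, 1, 3, 4, 5, 0] : List (Fin 6)) univ i ≠ none))
      = ({0, 2} : Finset (Fin 7)) ∧
    (univ.filter (fun i => i ∈ Ben 1 ∧
        seqMatch pr (fun _ => 1) ([1, 2, 3, 4, 5, 0] : List (Fin 6)) univ i ≠ none))
      = ({0, 2, 5} : Finset (Fin 7)) ∧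
    (univ.filter (fun i => i ∈ Ben 1 ∧
        seqMatch pr (fun _ => 1) ([2, 1, 3, 4, 5, 0] : List (Fin 6)) univ i ≠ none)) ⊂
    (univ.filter (fun i => i ∈ Ben 1 ∧
        seqMatch pr (fun _ => 1) ([1, 2, 3, 4, 5, 0] : List (Fin 6)) univ i ≠ none)) := by
  obtain ⟨hE, hu, hc⟩ := hsoft
  have hEl : ∀ (c : Fin 6) (i : Fin 7), Elig pr c i := fun c i => hE c i
  -- availability pools
  -- branch ▷ : [2,1,3,4,5,0]
  have T1 : seqTop pr 2 1 (univ : Finset (Fin 7)) = {0} := by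
    refine seqTop_eq_singleton pr 2 _ 0 (hEl 2) (by decide) ?_
    intro j hj hne
    rw [hc 2 (by decide) 0 j, hB2]
    revert j; decide
  have T2 : seqTop pr 1 1 ({1,2,3,4,5,6} : Finset (Fin 7)) = {2} := by
    refine seqTop_eq_singleton pr 1 _ 2 (hEl 1) (by decide) ?_
    intro j hj hne
    rw [hc 1 (by decide) 2 j, hB1]
    revert j; decide
  have T3 : seqTop pr 3 1 ({1,3,4,5,6} : Finset (Fin 7)) = {1} := by
    refine seqTop_eq_singleton pr 3 _ 1 (hEl 3) (by decide) ?_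
    intro j hj hne
    rw [hc 3 (by decide) 1 j, hB3]
    revert j; decide
  have T4 : seqTop pr 4 1 ({3,4,5,6} : Finset (Fin 7)) = {3} := by
    refine seqTop_eq_singleton pr 4 _ 3 (hEl 4) (by decide) ?_
    intro j hj hne
    rw [hc 4 (by decide) 3 j, hB4]
    revert j; decide
  have T5 : seqTop pr 5 1 ({4,5,6} : Finset (Fin 7)) = {6} := by
    refine seqTop_eq_singleton pr 5 _ 6 (hEl 5) (by decide) ?_
    intro j hj hne
    rw [hc 5 (by decide) 6 j, hB5]
    revert j; decide
  have T6 : seqTop pr 0 1 ({4,5} : Finset (Fin 7)) = {4} := by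
    refine seqTop_eq_singleton pr 0 _ 4 (hEl 0) (by decide) ?_
    intro j hj hne
    rw [hu 4 j]
    revert j; decide
  -- branch ▷' : [1,2,3,4,5,0]
  have S1 : seqTop pr 1 1 (univ : Finset (Fin 7)) = {0} := by
    refine seqTop_eq_singleton pr 1 _ 0 (hEl 1) (by decide) ?_
    intro j hj hne
    rw [hc 1 (by decide) 0 j, hB1]
    revert j; decide
  have S2 : seqTop pr 2 1 ({1,2,3,4,5,6} : Finset (Fin 7)) = {1} := by
    refine seqTop_eq_singleton pr 2 _ 1 (hEl 2) (by decide) ?_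
    intro j hj hne
    rw [hc 2 (by decide) 1 j, hB2]
    revert j; decide
  have S3 : seqTop pr 3 1 ({2,3,4,5,6} : Finset (Fin 7)) = {4} := by
    refine seqTop_eq_singleton pr 3 _ 4 (hEl 3) (by decide) ?_
    intro j hj hne
    rw [hc 3 (by decide) 4 j, hB3]
    revert j; decide
  have S4 : seqTop pr 4 1 ({2,3,5,6} : Finset (Fin 7)) = {2} := by
    refine seqTop_eq_singleton pr 4 _ 2 (hEl 4) (by decide) ?_
    intro j hj hne
    rw [hc 4 (by decide) 2 j, hB4]
    revert j; decide
  have S5 : seqTop pr 5 1 ({3,5,6} : Finset (Fin 7)) = {3} := by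
    refine seqTop_eq_singleton pr 5 _ 3 (hEl 5) (by decide) ?_
    intro j hj hne
    rw [hc 5 (by decide) 3 j, hB5]
    revert j; decide
  have S6 : seqTop pr 0 1 ({5,6} : Finset (Fin 7)) = {5} := by
    refine seqTop_eq_singleton pr 0 _ 5 (hEl 0) (by decide) ?_
    intro j hj hne
    rw [hu 5 j]
    revert j; decide
  -- sdiff computations
  have D1 : (univ : Finset (Fin 7)) \ {0} = {1,2,3,4,5,6} := by decide
  have D2 : ({1,2,3,4,5,6} : Finset (Fin 7)) \ {2} = {1,3,4,5,6} := by decide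
  have D3 : ({1,3,4,5,6} : Finset (Fin 7)) \ {1} = {3,4,5,6} := by decide
  have D4 : ({3,4,5,6} : Finset (Fin 7)) \ {3} = {4,5,6} := by decide
  have D5 : ({4,5,6} : Finset (Fin 7)) \ {6} = {4,5} := by decide
  have E2 : ({1,2,3,4,5,6} : Finset (Fin 7)) \ {1} = {2,3,4,5,6} := by decide
  have E3 : ({2,3,4,5,6} : Finset (Fin 7)) \ {4} = {2,3,5,6} := by decide
  have E4 : ({2,3,5,6} : Finset (Fin 7)) \ {2} = {3,5,6} := by decide
  have E5 : ({3,5,6} : Finset (Fin 7)) \ {3} = {5,6} := by decide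
  have M1 : ∀ i : Fin 7, seqMatch pr (fun _ => 1) ([2,1,3,4,5,0] : List (Fin 6)) univ i =
      (if i ∈ ({0} : Finset (Fin 7)) then some 2 else
       if i ∈ ({2} : Finset (Fin 7)) then some 1 else
       if i ∈ ({1} : Finset (Fin 7)) then some 3 else
       if i ∈ ({3} : Finset (Fin 7)) then some 4 else
       if i ∈ ({6} : Finset (Fin 7)) then some 5 else
       if i ∈ ({4} : Finset (Fin 7)) then some 0 else none) := by
    intro i
    simp only [seqMatch, T1, D1, T2, D2, T3, D3, T4, D4, T5, D5, T6]
  have M2 : ∀ i : Fin 7, seqMatch pr (fun _ => 1) ([1,2,3,4,5,0] : List (Fin 6)) univ i =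
      (if i ∈ ({0} : Finset (Fin 7)) then some 1 else
       if i ∈ ({1} : Finset (Fin 7)) then some 2 else
       if i ∈ ({4} : Finset (Fin 7)) then some 3 else
       if i ∈ ({2} : Finset (Fin 7)) then some 4 else
       if i ∈ ({3} : Finset (Fin 7)) then some 5 else
       if i ∈ ({5} : Finset (Fin 7)) then some 0 else none) := by
    intro i
    simp only [seqMatch, S1, D1, S2, E2, S3, E3, S4, E4, S5, E5, S6]
  have G1 : (univ.filter (fun i => i ∈ Ben 1 ∧
      seqMatch pr (fun _ => 1) ([2, 1, 3, 4, 5, 0] : List (Fin 6)) univ i ≠ none))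
      = ({0, 2} : Finset (Fin 7)) := by
    simp only [M1, hB1]; decide
  have G2 : (univ.filter (fun i => i ∈ Ben 1 ∧
      seqMatch pr (fun _ => 1) ([1, 2, 3, 4, 5, 0] : List (Fin 6)) univ i ≠ none))
      = ({0, 2, 5} : Finset (Fin 7)) := by
    simp only [M2, hB1]; decide
  refine ⟨G1, G2, ?_⟩
  rw [G1, G2]
  decide

end ReserveSystem
end

section
/- In a hard reserve system, a sequential reserve matching can be Pareto dominated by another sequential reserve matching: with patients i_1 π i_2, an unreserved category u of capacity 1, and a preferential treatment category c of capacity 1 with beneficiary set I_c = {i_1} and hard reserves (i_2 is ineligible for c), processing u before c matches only {i_1}, while processing c before u matches {i_1, i_2}. -/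
open Finset

section ReserveSystem

variable {I C : Type*} [Fintype I] [DecidableEq I] [Fintype C] [DecidableEq C]

/-- Hard reserves induced by the baseline priority `π`: only beneficiaries are eligible
for a preferential treatment category, and they are ranked by `π`; the unreserved
category `u` ranks all patients by `π` (all eligible). -/
def BaselineHard (π : I → ℕ) (Ben : C → Finset I) (u : C)
    (pr : C → Option I → ℕ) : Prop :=
  (∀ i, pr u none < pr u (some i)) ∧
  (∀ i j : I, pr u (some j) < pr u (some i) ↔ π j < π i) ∧
  (∀ c, c ≠ u → ∀ i, (i ∈ Ben c ↔ pr c none < pr c (some i))) ∧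
  (∀ c, c ≠ u → ∀ i j, i ∈ Ben c → j ∈ Ben c →
      (pr c (some j) < pr c (some i) ↔ π j < π i))

/-- Example 2: under hard reserves a sequential reserve matching can be Pareto dominated
by another one. Patients `0 π 1`, unreserved category `u = 0` and preferential treatment
category `c = 1` with `I_c = {0}` and hard reserves, both of capacity one: processing
`u` before `c` matches only `{0}`, while processing `c` before `u` matches `{0, 1}`. -/
theorem hard_reserve_pareto_dominance
    (pr : Fin 2 → Option (Fin 2) → ℕ) (hpr : ∀ c, Function.Injective (pr c))
    (Ben : Fin 2 → Finset (Fin 2)) (hB0 : Ben 0 = univ) (hB1 : Ben 1 = {0})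
    (hhard : BaselineHard (fun i : Fin 2 => 2 - (i : ℕ)) Ben 0 pr) :
    (univ.filter (fun i =>
        seqMatch pr (fun _ => 1) ([0, 1] : List (Fin 2)) univ i ≠ none))
      = ({0} : Finset (Fin 2)) ∧
    (univ.filter (fun i =>
        seqMatch pr (fun _ => 1) ([1, 0] : List (Fin 2)) univ i ≠ none))
      = ({0, 1} : Finset (Fin 2)) ∧
    (univ.filter (fun i =>
        seqMatch pr (fun _ => 1) ([0, 1] : List (Fin 2)) univ i ≠ none)) ⊂
    (univ.filter (fun i =>
        seqMatch pr (fun _ => 1) ([1, 0] : List (Fin 2)) univ i ≠ none)) := by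
  obtain ⟨h1, h2, h3, h4⟩ := hhard
  have h01 : pr 0 (some 1) < pr 0 (some 0) := (h2 0 1).mpr (by norm_num)
  have hE10 : Elig pr 1 0 := (h3 1 (by decide) 0).mp (by rw [hB1]; simp)
  have hNE11 : ¬ Elig pr 1 1 := fun h => by
    have := (h3 1 (by decide) 1).mpr h
    rw [hB1] at this
    simp at this
  have hfilt0 : ∀ s : Finset (Fin 2),
      s.filter (fun i => Elig pr 0 i) = s := fun s =>
    filter_true_of_mem (fun i _ => h1 i)
  have hfilt1 : (univ : Finset (Fin 2)).filter (fun i => Elig pr 1 i) = {0} := by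
    rw [Finset.ext_iff, Fin.forall_fin_two]
    simp [hE10, hNE11]
  have hcompl : (univ : Finset (Fin 2)) \ ({0} : Finset (Fin 2)) = {1} := by decide
  have sA : seqTop pr 0 1 (univ : Finset (Fin 2)) = {0} := by
    have e0 : (univ : Finset (Fin 2)).filter
        (fun j => pr 0 (some 0) < pr 0 (some j)) = ∅ := by
      rw [filter_eq_empty_iff]
      rw [Fin.forall_fin_two]
      exact ⟨fun _ => lt_irrefl _, fun _ => by omega⟩
    have h0m : (0 : Fin 2) ∈ (univ : Finset (Fin 2)).filter
        (fun j => pr 0 (some 1) < pr 0 (some j)) := by simp [h01]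
    rw [seqTop, hfilt0, Finset.ext_iff, Fin.forall_fin_two]
    simp only [mem_filter, mem_univ, true_and, mem_singleton]
    constructor
    · rw [e0]; simp
    · apply iff_of_false
      · have := card_pos.mpr ⟨(0 : Fin 2), h0m⟩
        omega
      · decide
  have sB : seqTop pr 1 1 ({1} : Finset (Fin 2)) = ∅ := by
    rw [seqTop]
    have : ({1} : Finset (Fin 2)).filter (fun i => Elig pr 1 i) = ∅ := by
      rw [filter_eq_empty_iff]
      intro j hj
      simp only [mem_singleton] at hj
      subst hj
      exact hNE11
    rw [this, filter_empty]
  have sC : seqTop pr 1 1 (univ : Finset (Fin 2)) = {0} := by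
    rw [seqTop, hfilt1, Finset.ext_iff, Fin.forall_fin_two]
    simp only [mem_filter, mem_singleton]
    constructor
    · have : ({0} : Finset (Fin 2)).filter
          (fun j => pr 1 (some 0) < pr 1 (some j)) = ∅ := by
        rw [filter_eq_empty_iff]
        intro j hj
        simp only [mem_singleton] at hj
        subst hj
        exact lt_irrefl _
      rw [this]; simp
    · simp
  have sD : seqTop pr 0 1 ({1} : Finset (Fin 2)) = {1} := by
    rw [seqTop, hfilt0, Finset.ext_iff, Fin.forall_fin_two]
    simp only [mem_filter, mem_singleton]
    constructor
    · simp
    · have : ({1} : Finset (Fin 2)).filter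
          (fun j => pr 0 (some 1) < pr 0 (some j)) = ∅ := by
        rw [filter_eq_empty_iff]
        intro j hj
        simp only [mem_singleton] at hj
        subst hj
        exact lt_irrefl _
      rw [this]; simp
  have m10 : seqMatch pr (fun _ => 1) ([0, 1] : List (Fin 2)) univ 0 = some 0 := by
    simp [seqMatch, sA]
  have m11 : seqMatch pr (fun _ => 1) ([0, 1] : List (Fin 2)) univ 1 = none := by
    simp [seqMatch, sA, hcompl, sB]
  have m20 : seqMatch pr (fun _ => 1) ([1, 0] : List (Fin 2)) univ 0 = some 1 := by
    simp [seqMatch, sC]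
  have m21 : seqMatch pr (fun _ => 1) ([1, 0] : List (Fin 2)) univ 1 = some 0 := by
    simp [seqMatch, sC, hcompl, sD]
  have e1 : (univ.filter (fun i =>
      seqMatch pr (fun _ => 1) ([0, 1] : List (Fin 2)) univ i ≠ none))
      = ({0} : Finset (Fin 2)) := by
    rw [Finset.ext_iff, Fin.forall_fin_two]
    simp [m10, m11]
  have e2 : (univ.filter (fun i =>
      seqMatch pr (fun _ => 1) ([1, 0] : List (Fin 2)) univ i ≠ none))
      = ({0, 1} : Finset (Fin 2)) := by
    rw [Finset.ext_iff, Fin.forall_fin_two]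
    simp [m20, m21]
  refine ⟨e1, e2, ?_⟩
  rw [e1, e2]
  decide

end ReserveSystem
end

section
/- In a soft reserve system or a hard reserve system induced by a baseline priority order, for any n ∈ {0, 1, ..., r_u}, any two smart reserve matchings σ, ν ∈ M_S^n satisfy: σ⁻¹(u) = ν⁻¹(u); the set of patients matched with a preferential treatment category that they are a beneficiary of is the same under σ and ν; and σ(I) = ν(I) (the same set of patients is matched overall). -/
open Finset

section ReserveSystem

variable {I C : Type*} [Fintype I] [DecidableEq I] [Fintype C] [DecidableEq C]

/-- `i` is matched under `μ` to a preferential treatment category she is a beneficiary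
of. -/
def BenefMatched (Ben : C → Finset I) (u : C) (μ : I → Option C) (i : I) : Prop :=
  ∃ c, μ i = some c ∧ c ≠ u ∧ i ∈ Ben c

instance (Ben : C → Finset I) (u : C) (μ : I → Option C) (i : I) :
    Decidable (BenefMatched Ben u μ i) := by
  unfold BenefMatched; infer_instance

/-- Number of patients matched to preferential treatment categories they are
beneficiaries of. -/
def benefCount (Ben : C → Finset I) (u : C) (μ : I → Option C) : ℕ :=
  (univ.filter (fun i => BenefMatched Ben u μ i)).card

/-- `μ` is a matching that is maximal in beneficiary assignment. -/
def MaxBeneficiary (r : C → ℕ) (Ben : C → Finset I) (u : C) (μ : I → Option C) : Prop :=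
  IsMatching r μ ∧ ∀ ν : I → Option C, IsMatching r ν →
    benefCount Ben u ν ≤ benefCount Ben u μ

structure SmartState (I C : Type*) where
  Ju : Finset I
  J : Finset I
  Ms : Set (I → Option C)

attribute [local instance] Classical.propDecidable

/-- Step 1.(k) of the smart reserve matching algorithm, processing patient `i`. -/
noncomputable def smartStep (Ben : C → Finset I) (u : C) (n : ℕ)
    (st : SmartState I C) (i : I) : SmartState I C :=
  if st.Ju.card < n ∧ ∃ μ ∈ st.Ms, μ i = some u then
    ⟨insert i st.Ju, st.J, {μ ∈ st.Ms | μ i = some u}⟩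
  else if ∃ μ ∈ st.Ms, BenefMatched Ben u μ i then
    ⟨st.Ju, insert i st.J, {μ ∈ st.Ms | BenefMatched Ben u μ i}⟩
  else st

/-- Step 1 of the smart reserve matching algorithm: patients are processed one at a time
along the list `L` (which enumerates the patients in decreasing baseline priority),
starting from the set of all matchings that are maximal in beneficiary assignment. -/
noncomputable def smartRun (r : C → ℕ) (Ben : C → Finset I) (u : C) (n : ℕ)
    (L : List I) : SmartState I C :=
  L.foldl (smartStep Ben u n) ⟨∅, ∅, {μ | MaxBeneficiary r Ben u μ}⟩

/-- Assign one unit of category `c` to the highest baseline-priority remaining eligible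
patient (if any). -/
noncomputable def fillOne (pr : C → Option I → ℕ) (π : I → ℕ) (c : C)
    (st : (I → Option C) × Finset I) : (I → Option C) × Finset I :=
  if h : (st.2.filter (fun i => Elig pr c i)).Nonempty then
    (Function.update st.1
        (Classical.choose (Finset.exists_max_image (st.2.filter (fun i => Elig pr c i)) π h))
        (some c),
     st.2.erase
        (Classical.choose (Finset.exists_max_image (st.2.filter (fun i => Elig pr c i)) π h)))
  else st

/-- The set `M_S^n` of smart reserve matchings with parameter `n`: outcomes of Step 1
(processed along the baseline-priority-decreasing enumeration `L` of the patients),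
followed by Step 2, which assigns the committed patients as in a chosen matching of the
final candidate set, and then fills the remaining units of the preferential treatment
categories in an arbitrary order `P` followed by the remaining unreserved units, one at
a time to the highest baseline-priority remaining eligible patient. -/
noncomputable def SmartMatchings (pr : C → Option I → ℕ) (π : I → ℕ) (r : C → ℕ)
    (Ben : C → Finset I) (u : C) (n : ℕ) : Set (I → Option C) :=
  { σ | ∃ L : List I, L.Nodup ∧ (∀ i : I, i ∈ L) ∧ L.Pairwise (fun a b => π b < π a) ∧
      ∃ μ ∈ (smartRun r Ben u n L).Ms,
        ∃ P : List C, u ∉ P ∧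
          (∀ c, c ≠ u → P.count c =
            r c - (((smartRun r Ben u n L).J).filter (fun i => μ i = some c)).card) ∧
          σ = ((P ++ List.replicate (r u - (smartRun r Ben u n L).Ju.card) u).foldl
                (fun st c => fillOne pr π c st)
                (fun i =>
                    if i ∈ (smartRun r Ben u n L).Ju ∪ (smartRun r Ben u n L).J
                    then μ i else none,
                 univ \ ((smartRun r Ben u n L).Ju ∪ (smartRun r Ben u n L).J))).1 }

end ReserveSystem

/-!
Both matchings come out of the same run of Step 1, since `π` admits only one decreasing
enumeration of the patients. Every candidate matching left by Step 1 sends the patients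
committed to `u` there and those committed to preferential treatment categories to categories
they are beneficiaries of, so committed patients are treated alike. An uncommitted patient is
no beneficiary of a preferential treatment category with a unit left: giving her that unit
would raise the number of beneficiary assignments of a candidate, which is maximal. So Step 2
makes no further beneficiary assignment. Under soft reserves every remaining patient is
eligible everywhere, so each unit goes to the next patient in baseline order whatever its
category, and both matchings have the same number of preferential units left; under hard
reserves nobody left is eligible for those units, and only the unreserved units, the same for
both, are handed out.
-/

section SameTreatment

variable {I C : Type*} {Ben : C → Finset I} {u : C} {i : I}

def SameTreatment (Ben : C → Finset I) (u : C) (i : I) (x y : Option C) : Prop :=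
  (x = some u ↔ y = some u) ∧
    ((∃ c, x = some c ∧ c ≠ u ∧ i ∈ Ben c) ↔ (∃ c, y = some c ∧ c ≠ u ∧ i ∈ Ben c)) ∧
    (x ≠ none ↔ y ≠ none)

theorem SameTreatment.refl (x : Option C) : SameTreatment Ben u i x x :=
  ⟨Iff.rfl, Iff.rfl, Iff.rfl⟩

theorem sameTreatment_some_some {c d : C} (hc : c ≠ u) (hd : d ≠ u)
    (h : i ∈ Ben c ↔ i ∈ Ben d) : SameTreatment Ben u i (some c) (some d) := by
  simp [SameTreatment, hc, hd, h]

end SameTreatment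

section Filling

variable {I C : Type*} [DecidableEq I] {pr : C → Option I → ℕ} {π : I → ℕ}
  {Ben : C → Finset I} {u : C}

theorem fillOne_of_forall_not_elig {c : C} {A : Finset I}
    (hA : ∀ i ∈ A, ¬ Elig pr c i) (f : I → Option C) :
    fillOne pr π c (f, A) = (f, A) := by
  have : A.filter (Elig pr c) = ∅ := filter_eq_empty_iff.2 hA
  simp [fillOne, this]

theorem fillOne_pair_of_forall_elig {c d : C} {A : Finset I} (hA : A.Nonempty)
    (hc : ∀ i ∈ A, Elig pr c i) (hd : ∀ i ∈ A, Elig pr d i) (f g : I → Option C) :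
    ∃ j ∈ A, fillOne pr π c (f, A) = (Function.update f j (some c), A.erase j) ∧
      fillOne pr π d (g, A) = (Function.update g j (some d), A.erase j) := by
  have hc' : A.filter (Elig pr c) = A := filter_true_of_mem hc
  have hd' : A.filter (Elig pr d) = A := filter_true_of_mem hd
  simp only [fillOne, hc', hd', dif_pos hA]
  exact ⟨_, (Classical.choose_spec (A.exists_max_image π hA)).1, rfl, rfl⟩

theorem foldl_fillOne_of_forall_not_elig {Q : List C} {A : Finset I}
    (hQ : ∀ c ∈ Q, ∀ i ∈ A, ¬ Elig pr c i) (f : I → Option C) :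
    Q.foldl (fun st c => fillOne pr π c st) (f, A) = (f, A) := by
  induction Q with
  | nil => rfl
  | cons c Q ih =>
    rw [List.foldl_cons, fillOne_of_forall_not_elig (hQ c List.mem_cons_self)]
    exact ih fun d hd => hQ d (List.mem_cons_of_mem c hd)

/-- With every remaining patient eligible, a unit goes to the same patient whatever its
category, so both fillings serve the same patients in the same order. -/
theorem foldl_fillOne_rel (R : I → Option C → Option C → Prop) {Q Q' : List C}
    {A : Finset I} (hQ : ∀ c ∈ Q, ∀ i ∈ A, Elig pr c i) (hQ' : ∀ d ∈ Q', ∀ i ∈ A, Elig pr d i)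
    (hQQ' : List.Forall₂ (fun c d => ∀ i ∈ A, R i (some c) (some d)) Q Q')
    {f g : I → Option C} (hfg : ∀ i, R i (f i) (g i)) (i : I) :
    R i ((Q.foldl (fun st c => fillOne pr π c st) (f, A)).1 i)
      ((Q'.foldl (fun st c => fillOne pr π c st) (g, A)).1 i) := by
  induction Q generalizing Q' A f g with
  | nil => cases hQQ'; exact hfg i
  | cons c Q ih =>
    obtain ⟨d, Q', hcd, htail, rfl⟩ := List.forall₂_cons_left_iff.1 hQQ'
    simp only [List.foldl_cons]
    rcases A.eq_empty_or_nonempty with rfl | hA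
    · simp only [fillOne_of_forall_not_elig (notMem_empty · |>.elim)]
      exact ih (by simp) (by simp) (by simpa using htail) hfg
    obtain ⟨j, hj, hfc, hgd⟩ := fillOne_pair_of_forall_elig (π := π) hA
      (hQ c List.mem_cons_self) (hQ' d List.mem_cons_self) f g
    rw [hfc, hgd]
    refine ih (fun e he k hk => hQ e (List.mem_cons_of_mem c he) k (mem_of_mem_erase hk))
      (fun e he k hk => hQ' e (List.mem_cons_of_mem d he) k (mem_of_mem_erase hk))
      (htail.imp fun e e' h k hk => h k (mem_of_mem_erase hk)) fun k => ?_
    by_cases hkj : k = j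
    · subst hkj; simpa using hcd k hj
    · simpa [Function.update_of_ne hkj] using hfg k

theorem foldl_fillOne_sameTreatment
    (hbase : BaselineSoft π Ben u pr ∨ BaselineHard π Ben u pr)
    {A : Finset I} {P P' : List C} (hP : ∀ c ∈ P, c ≠ u ∧ ∀ i ∈ A, i ∉ Ben c)
    (hP' : ∀ c ∈ P', c ≠ u ∧ ∀ i ∈ A, i ∉ Ben c) (hlen : P.length = P'.length)
    {f g : I → Option C} (hfg : ∀ i, SameTreatment Ben u i (f i) (g i)) (m : ℕ) (i : I) :
    SameTreatment Ben u i
      (((P ++ List.replicate m u).foldl (fun st c => fillOne pr π c st) (f, A)).1 i)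
      (((P' ++ List.replicate m u).foldl (fun st c => fillOne pr π c st) (g, A)).1 i) := by
  have hrep : List.Forall₂ (fun c d => ∀ i ∈ A, SameTreatment Ben u i (some c) (some d))
      (List.replicate m u) (List.replicate m u) :=
    List.forall₂_same.2 fun _ _ _ _ => .refl _
  rcases hbase with hsoft | hhard
  · refine foldl_fillOne_rel _ (fun c _ i _ => hsoft.1 c i) (fun c _ i _ => hsoft.1 c i)
      (List.rel_append (List.forall₂_iff_zip.2 ⟨hlen, fun hcd => ?_⟩) hrep) hfg i
    obtain ⟨hc, hd⟩ := List.of_mem_zip hcd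
    exact fun i hi => sameTreatment_some_some (hP _ hc).1 (hP' _ hd).1
      (iff_of_false ((hP _ hc).2 i hi) ((hP' _ hd).2 i hi))
  · have hnot : ∀ Q : List C, (∀ c ∈ Q, c ≠ u ∧ ∀ i ∈ A, i ∉ Ben c) →
        ∀ c ∈ Q, ∀ i ∈ A, ¬ Elig pr c i :=
      fun Q hQ c hc i hi he => (hQ c hc).2 i hi ((hhard.2.2.1 c (hQ c hc).1 i).2 he)
    simp only [List.foldl_append, foldl_fillOne_of_forall_not_elig (hnot P hP),
      foldl_fillOne_of_forall_not_elig (hnot P' hP')]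
    have hu : ∀ c ∈ List.replicate m u, ∀ i ∈ A, Elig pr c i :=
      fun c hc i _ => List.eq_of_mem_replicate hc ▸ hhard.1 i
    exact foldl_fillOne_rel _ hu hu hrep hfg i

end Filling

section Candidates

variable {I C : Type*} [Fintype I] [DecidableEq I] [DecidableEq C]

theorem MaxBeneficiary.le_card_benefMatched {r : C → ℕ} {Ben : C → Finset I} {u : C}
    {μ : I → Option C} (hμ : MaxBeneficiary r Ben u μ) {i : I}
    (hi : ¬ BenefMatched Ben u μ i) {c : C} (hcu : c ≠ u) (hic : i ∈ Ben c) :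
    r c ≤ #{j | BenefMatched Ben u μ j ∧ μ j = some c} := by
  by_contra! hslack
  set μ' : I → Option C := fun j =>
    if BenefMatched Ben u μ j then μ j else if j = i then some c else none with hμ'
  have hmatch : IsMatching r μ' := by
    intro d
    by_cases hdc : d = c
    · subst hdc
      calc #{j | μ' j = some d}
          ≤ #(insert i ({j | BenefMatched Ben u μ j ∧ μ j = some d} : Finset I)) := by
            refine card_le_card fun j hj => ?_
            simp only [hμ', mem_filter, mem_univ, true_and, mem_insert] at hj ⊢
            split_ifs at hj <;> simp_all
        _ ≤ r d := (card_insert_le _ _).trans hslack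
    · refine le_trans (card_le_card fun j hj => ?_) (hμ.1 d)
      simp only [hμ', mem_filter, mem_univ, true_and] at hj ⊢
      split_ifs at hj <;> simp_all [eq_comm]
  have hmore : insert i ({j | BenefMatched Ben u μ j} : Finset I) ⊆
      ({j | BenefMatched Ben u μ' j} : Finset I) := by
    intro j hj
    simp only [mem_insert, mem_filter, mem_univ, true_and] at hj ⊢
    rcases hj with rfl | hjμ
    · exact ⟨c, by simp [hμ', hi], hcu, hic⟩
    · have hμ'j : μ' j = μ j := if_pos hjμ
      obtain ⟨e, he, heu, hje⟩ := hjμ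
      exact ⟨e, hμ'j.trans he, heu, hje⟩
  have hcount := (card_le_card hmore).trans (hμ.2 μ' hmatch)
  rw [card_insert_of_notMem (by simpa using hi)] at hcount
  unfold benefCount at hcount
  omega

namespace SmartState

def HonorsCommitments (r : C → ℕ) (Ben : C → Finset I) (u : C) (st : SmartState I C) :
    Prop :=
  ∀ μ ∈ st.Ms, MaxBeneficiary r Ben u μ ∧ (∀ i ∈ st.Ju, μ i = some u) ∧
    ∀ i ∈ st.J, BenefMatched Ben u μ i

def Extends (st' st : SmartState I C) : Prop :=
  st.Ju ⊆ st'.Ju ∧ st.J ⊆ st'.J ∧ st'.Ms ⊆ st.Ms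

end SmartState

theorem SmartState.HonorsCommitments.sameTreatment_restrict {r : C → ℕ} {Ben : C → Finset I}
    {u : C} {st : SmartState I C} (h : st.HonorsCommitments r Ben u) {μ μ' : I → Option C}
    (hμ : μ ∈ st.Ms) (hμ' : μ' ∈ st.Ms) (i : I) :
    SameTreatment Ben u i (if i ∈ st.Ju ∪ st.J then μ i else none)
      (if i ∈ st.Ju ∪ st.J then μ' i else none) := by
  obtain ⟨-, hJu, hJ⟩ := h μ hμ
  obtain ⟨-, hJu', hJ'⟩ := h μ' hμ'
  by_cases hiJu : i ∈ st.Ju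
  · simpa [hiJu, hJu i hiJu, hJu' i hiJu] using SameTreatment.refl _
  by_cases hiJ : i ∈ st.J
  · obtain ⟨c, hc, hcu, hic⟩ := hJ i hiJ
    obtain ⟨d, hd, hdu, hid⟩ := hJ' i hiJ
    simpa [hiJ, hc, hd] using sameTreatment_some_some hcu hdu (iff_of_true hic hid)
  · simpa [hiJu, hiJ] using SameTreatment.refl _

end Candidates

section Counting

variable {I C : Type*} [Fintype C] [DecidableEq C]

theorem length_eq_sum_sub_card {u : C} {r : C → ℕ} {J : Finset I} {μ : I → Option C}
    {P : List C} (hPu : u ∉ P) (hP : ∀ c, c ≠ u → P.count c = r c - #{j ∈ J | μ j = some c})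
    (hJ : ∀ j ∈ J, ∃ c, μ j = some c ∧ c ≠ u) (hr : ∀ c, #{j ∈ J | μ j = some c} ≤ r c) :
    P.length = ∑ c ∈ univ.erase u, r c - #J := by
  have hJcard : #J = ∑ c ∈ univ.erase u, #{j ∈ J | μ j = some c} := by
    rw [card_eq_sum_card_fiberwise (t := (univ.erase u).map .some), sum_map]
    · rfl
    · intro j hj
      obtain ⟨c, hc, hcu⟩ := hJ j hj
      simp [hc, hcu]
  calc P.length = ∑ c ∈ univ.erase u, P.count c := by
        simpa using (Multiset.sum_count_eq_card (m := (P : Multiset C)) (s := univ.erase u)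
          fun c hc => mem_erase.2 ⟨ne_of_mem_of_not_mem hc hPu, mem_univ c⟩).symm
    _ = ∑ c ∈ univ.erase u, (r c - #{j ∈ J | μ j = some c}) :=
        sum_congr rfl fun c hc => hP c (ne_of_mem_erase hc)
    _ = ∑ c ∈ univ.erase u, r c - #J := by
        rw [sum_tsub_distrib _ fun c _ => hr c, hJcard]

end Counting

section SmartRun

variable {I C : Type*} [Fintype I] [DecidableEq I] [Fintype C] [DecidableEq C]
variable {r : C → ℕ} {Ben : C → Finset I} {u : C} {n : ℕ}

theorem smartStep_extends (st : SmartState I C) (i : I) :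
    (smartStep Ben u n st i).Extends st := by
  unfold smartStep
  split_ifs
  exacts [⟨subset_insert _ _, subset_rfl, Set.sep_subset _ _⟩,
    ⟨subset_rfl, subset_insert _ _, Set.sep_subset _ _⟩,
    ⟨subset_rfl, subset_rfl, subset_rfl⟩]

theorem foldl_smartStep_extends (L : List I) (st : SmartState I C) :
    (L.foldl (smartStep Ben u n) st).Extends st := by
  induction L generalizing st with
  | nil => exact ⟨subset_rfl, subset_rfl, subset_rfl⟩
  | cons i L ih =>
    obtain ⟨hJu, hJ, hMs⟩ := smartStep_extends (n := n) (Ben := Ben) (u := u) st i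
    obtain ⟨hJu', hJ', hMs'⟩ := ih (smartStep Ben u n st i)
    exact ⟨hJu.trans hJu', hJ.trans hJ', hMs'.trans hMs⟩

theorem smartStep_honorsCommitments {st : SmartState I C}
    (h : st.HonorsCommitments r Ben u) (i : I) :
    (smartStep Ben u n st i).HonorsCommitments r Ben u := by
  unfold smartStep
  split_ifs
  · rintro μ ⟨hμ, hμi⟩
    obtain ⟨hmax, hJu, hJ⟩ := h μ hμ
    exact ⟨hmax, by simpa [hμi] using hJu, hJ⟩
  · rintro μ ⟨hμ, hμi⟩
    obtain ⟨hmax, hJu, hJ⟩ := h μ hμ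
    exact ⟨hmax, hJu, by simpa [hμi] using hJ⟩
  · exact h

theorem foldl_smartStep_honorsCommitments (L : List I) {st : SmartState I C}
    (h : st.HonorsCommitments r Ben u) :
    (L.foldl (smartStep Ben u n) st).HonorsCommitments r Ben u := by
  induction L generalizing st with
  | nil => exact h
  | cons i L ih => exact ih (smartStep_honorsCommitments h i)

theorem smartRun_honorsCommitments (L : List I) :
    (smartRun r Ben u n L).HonorsCommitments r Ben u :=
  foldl_smartStep_honorsCommitments L fun _ hμ => ⟨hμ, by simp, by simp⟩

theorem smartStep_commits_or_excludes (st : SmartState I C) (i : I) :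
    i ∈ (smartStep Ben u n st i).Ju ∨ i ∈ (smartStep Ben u n st i).J ∨
      ∀ μ ∈ (smartStep Ben u n st i).Ms, ¬ BenefMatched Ben u μ i := by
  unfold smartStep
  split_ifs with _ hben
  · exact .inl (mem_insert_self _ _)
  · exact .inr (.inl (mem_insert_self _ _))
  · exact .inr (.inr fun μ hμ hμi => hben ⟨μ, hμ, hμi⟩)

theorem not_benefMatched_of_foldl_smartStep {L : List I} {i : I} (hi : i ∈ L)
    {st : SmartState I C} (hiJu : i ∉ (L.foldl (smartStep Ben u n) st).Ju)
    (hiJ : i ∉ (L.foldl (smartStep Ben u n) st).J) {μ : I → Option C}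
    (hμ : μ ∈ (L.foldl (smartStep Ben u n) st).Ms) : ¬ BenefMatched Ben u μ i := by
  obtain ⟨L₁, L₂, rfl⟩ := List.append_of_mem hi
  rw [List.foldl_append, List.foldl_cons] at hiJu hiJ hμ
  obtain ⟨hJu, hJ, hMs⟩ := foldl_smartStep_extends L₂ (smartStep Ben u n (L₁.foldl _ st) i)
  rcases smartStep_commits_or_excludes (L₁.foldl (smartStep Ben u n) st) i with h | h | h
  exacts [absurd (hJu h) hiJu, absurd (hJ h) hiJ, h μ (hMs hμ)]

theorem benefMatched_iff_mem_smartRun_J {L : List I} (hL : ∀ i, i ∈ L) {μ : I → Option C}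
    (hμ : μ ∈ (smartRun r Ben u n L).Ms) (i : I) :
    BenefMatched Ben u μ i ↔ i ∈ (smartRun r Ben u n L).J := by
  obtain ⟨-, hJu, hJ⟩ := smartRun_honorsCommitments L μ hμ
  refine ⟨fun hi => ?_, hJ i⟩
  by_contra hiJ
  by_cases hiJu : i ∈ (smartRun r Ben u n L).Ju
  · obtain ⟨c, hc, hcu, -⟩ := hi
    exact hcu (Option.some.inj (hc.symm.trans (hJu i hiJu)))
  · exact not_benefMatched_of_foldl_smartStep (hL i) hiJu hiJ hμ hi

theorem smartRun_remaining_units {L : List I} (hL : ∀ i, i ∈ L) {μ : I → Option C}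
    (hμ : μ ∈ (smartRun r Ben u n L).Ms) {P : List C} (hPu : u ∉ P)
    (hP : ∀ c, c ≠ u → P.count c = r c - #{i ∈ (smartRun r Ben u n L).J | μ i = some c}) :
    P.length = ∑ c ∈ univ.erase u, r c - #(smartRun r Ben u n L).J ∧
      ∀ c ∈ P, c ≠ u ∧
        ∀ i ∈ univ \ ((smartRun r Ben u n L).Ju ∪ (smartRun r Ben u n L).J), i ∉ Ben c := by
  obtain ⟨hmax, -, hJ⟩ := smartRun_honorsCommitments L μ hμ
  refine ⟨length_eq_sum_sub_card hPu hP (fun j hj => ?_) fun c => ?_, fun c hc => ?_⟩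
  · obtain ⟨c, hc, hcu, -⟩ := hJ j hj
    exact ⟨c, hc, hcu⟩
  · exact (card_le_card (filter_subset_filter _ (subset_univ _))).trans (hmax.1 c)
  have hcu : c ≠ u := ne_of_mem_of_not_mem hc hPu
  refine ⟨hcu, fun i hi hic => ?_⟩
  have hiJ : i ∉ (smartRun r Ben u n L).J := fun h => (mem_sdiff.1 hi).2 (mem_union_right _ h)
  have hfull := hmax.le_card_benefMatched
    (mt (benefMatched_iff_mem_smartRun_J hL hμ i).1 hiJ) hcu hic
  simp only [benefMatched_iff_mem_smartRun_J hL hμ] at hfull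
  have hpos := List.count_pos_iff.2 hc
  rw [hP c hcu] at hpos
  rw [← filter_filter, filter_mem_eq_inter, univ_inter] at hfull
  omega

end SmartRun

section ReserveSystem

variable {I C : Type*} [Fintype I] [DecidableEq I] [Fintype C] [DecidableEq C]

theorem smart_matchings_same_patients_general
    (π : I → ℕ)
    (Ben : C → Finset I) (u : C)
    (pr : C → Option I → ℕ)
    (r : C → ℕ)
    (hbase : BaselineSoft π Ben u pr ∨ BaselineHard π Ben u pr)
    (n : ℕ)
    (σ ν : I → Option C)
    (hσ : σ ∈ SmartMatchings pr π r Ben u n)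
    (hν : ν ∈ SmartMatchings pr π r Ben u n) :
    (∀ i, σ i = some u ↔ ν i = some u) ∧
    (∀ i, BenefMatched Ben u σ i ↔ BenefMatched Ben u ν i) ∧
    (∀ i, σ i ≠ none ↔ ν i ≠ none) := by
  obtain ⟨L, -, hL, hsort, μ, hμ, P, hPu, hP, rfl⟩ := hσ
  obtain ⟨L', -, hL', hsort', μ', hμ', P', hPu', hP', rfl⟩ := hν
  have : Std.Irrefl fun a b => π b < π a := ⟨fun a => lt_irrefl (π a)⟩
  obtain rfl : L = L' := hsort.eq_of_mem_iff hsort' fun i => iff_of_true (hL i) (hL' i)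
  obtain ⟨hlen, hcat⟩ := smartRun_remaining_units hL hμ hPu hP
  obtain ⟨hlen', hcat'⟩ := smartRun_remaining_units hL hμ' hPu' hP'
  have key := foldl_fillOne_sameTreatment hbase hcat hcat' (hlen.trans hlen'.symm)
    ((smartRun_honorsCommitments L).sameTreatment_restrict hμ hμ')
    (r u - #(smartRun r Ben u n L).Ju)
  exact ⟨fun i => (key i).1, fun i => (key i).2.1, fun i => (key i).2.2⟩

/-- Lemma 2: for a soft or hard reserve system induced by a baseline priority order and
any `n ∈ {0, …, r_u}`, any two smart reserve matchings in `M_S^n` match the same set of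
patients with the unreserved category, the same set of patients with preferential
treatment categories they are beneficiaries of, and the same set of patients overall. -/
theorem smart_matchings_same_patients
    (π : I → ℕ) (hπ : Function.Injective π)
    (Ben : C → Finset I) (u : C) (hBu : Ben u = univ)
    (pr : C → Option I → ℕ) (hpr : ∀ c, Function.Injective (pr c))
    (r : C → ℕ)
    (hbase : BaselineSoft π Ben u pr ∨ BaselineHard π Ben u pr)
    (n : ℕ) (hn : n ≤ r u)
    (σ ν : I → Option C)
    (hσ : σ ∈ SmartMatchings pr π r Ben u n)
    (hν : ν ∈ SmartMatchings pr π r Ben u n) :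
    (∀ i, σ i = some u ↔ ν i = some u) ∧
    (∀ i, BenefMatched Ben u σ i ↔ BenefMatched Ben u ν i) ∧
    (∀ i, σ i ≠ none ↔ ν i ≠ none) :=
  smart_matchings_same_patients_general π Ben u pr r hbase n σ ν hσ hν

end ReserveSystem
end
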